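/- arXiv:1807.01133 — 4 statements merged into one kernel-verified Lean document; each statement's English description precedes it below -/
import Mathlib

section
/- Let A be an m×m real matrix with nonnegative entries and let C_1, …, C_j be m×m real matrices such that |C_s| ≤ A entrywise for every s = 1, …, j. Then the spectral norm of the product C_1·C_2·⋯·C_j is bounded by the spectral norm of A^j, i.e., ‖C_1⋯C_j‖₂ ≤ ‖A^j‖₂. (In particular, the moving-average coefficient matrices B_{t,j} of the stationary NAR(p) solution satisfy ‖B_{t,j}‖₂ ≤ ‖|Ã|^j‖₂ for all t.) -/
noncomputable section
open MeasureTheory ProbabilityTheory Filter Matrix Topology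

instance matrixMeasurableSpace {m n α : Type*} [MeasurableSpace α] :
    MeasurableSpace (Matrix m n α) := inferInstanceAs (MeasurableSpace (m → n → α))

/-- Strict stationarity of a process indexed by `ℤ`: all finite-dimensional
distributions are shift invariant. -/
def StrictlyStationary {Ω α : Type*} [MeasurableSpace Ω] [MeasurableSpace α]
    (P : Measure Ω) (Z : ℤ → Ω → α) : Prop :=
  ∀ (k : ℤ) (n : ℕ) (t : Fin n → ℤ),
    P.map (fun ω i => Z (t i + k) ω) = P.map (fun ω i => Z (t i) ω)

/-- An i.i.d. process indexed by `ℤ`. -/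
def IID {Ω α : Type*} [MeasurableSpace Ω] [MeasurableSpace α]
    (P : Measure Ω) (Z : ℤ → Ω → α) : Prop :=
  (∀ t, Measurable (Z t)) ∧ iIndepFun Z P ∧
    ∀ t, P.map (Z t) = P.map (Z 0)

/-- For every `t`, the future innovations `{ε_s : s > t}` are independent of the
past of the network `{Ad_s : s ≤ t}`. -/
def FutureInnovIndep {Ω : Type*} [MeasurableSpace Ω] {d : ℕ}
    (P : Measure Ω) (ε : ℤ → Ω → (Fin d → ℝ))
    (Ad : ℤ → Ω → Matrix (Fin d) (Fin d) ℝ) : Prop :=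
  ∀ t : ℤ, IndepFun (fun ω (s : {s : ℤ // t < s}) => ε s ω)
      (fun ω (s : {s : ℤ // s ≤ t}) => Ad s ω) P

/-- entrywise absolute value `|B|` of a real matrix. -/
def entrywiseAbs {m n : Type*} (B : Matrix m n ℝ) : Matrix m n ℝ :=
  Matrix.of fun i j => |B i j|

/-- covariance of two real random variables. -/
def covR {Ω : Type*} [MeasurableSpace Ω] (P : Measure Ω) (U V : Ω → ℝ) : ℝ :=
  ∫ ω, U ω * V ω ∂P - (∫ ω, U ω ∂P) * (∫ ω, V ω ∂P)

/-- spectral norm (largest singular value) of a real square matrix. -/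
def sNorm {n : Type*} [Fintype n] [DecidableEq n] (B : Matrix n n ℝ) : ℝ :=
  ‖Matrix.toEuclideanCLM (𝕜 := ℝ) B‖

/-- ordered matrix product `M 1 * M 2 * ⋯ * M j` (empty product = identity). -/
def prodI {n : Type*} [Fintype n] [DecidableEq n] (M : ℕ → Matrix n n ℝ) :
    ℕ → Matrix n n ℝ
  | 0 => 1
  | j + 1 => prodI M j * M (j + 1)

/-- `Z n = O_P(1/√n)`: the sequence `√n · Z n` is bounded in probability. -/
def SqrtNBddInProb {Ω : Type*} [MeasurableSpace Ω] (P : Measure Ω)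
    (Z : ℕ → Ω → ℝ) : Prop :=
  ∀ δ : ℝ, 0 < δ → ∃ M : ℝ, ∀ᶠ n : ℕ in atTop,
    (P {ω | M < |Real.sqrt n * Z n ω|}).toReal ≤ δ

/-- the `(E,q)`-norm `(E|W|^q)^{1/q}` of a real random variable. -/
def Enorm {Ω : Type*} [MeasurableSpace Ω] (P : Measure Ω) (q : ℝ) (W : Ω → ℝ) : ℝ :=
  (∫ ω, |W ω| ^ q ∂P) ^ (1 / q)

/-- convergence in distribution of real random variables to a (possibly degenerate)
Gaussian with mean 0 and variance `v`. -/
def TendstoGaussian {Ω : Type*} [MeasurableSpace Ω] (P : Measure Ω)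
    (Z : ℕ → Ω → ℝ) (v : ℝ) : Prop :=
  ∀ f : BoundedContinuousFunction ℝ ℝ,
    Tendsto (fun n => ∫ ω, f (Z n ω) ∂P) atTop
      (𝓝 (∫ x, f x ∂(gaussianReal 0 v.toNNReal)))

/-- convergence in distribution of random vectors to a centered multivariate normal
with covariance matrix `C`, phrased via the Cramér–Wold device. -/
def TendstoGaussianVec {Ω κ : Type*} [MeasurableSpace Ω] [Fintype κ] (P : Measure Ω)
    (Z : ℕ → Ω → κ → ℝ) (C : Matrix κ κ ℝ) : Prop :=
  ∀ u : κ → ℝ, TendstoGaussian P (fun n ω => ∑ i, u i * Z n ω i)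
    (∑ i, ∑ j, u i * C i j * u j)

section Stacked

variable {d p : ℕ}

/-- dp×dp stacked (companion-type) matrix with first block row `B 0, …, B (p-1)`
and identity blocks on the subdiagonal. -/
def stacked (B : Fin p → Matrix (Fin d) (Fin d) ℝ) :
    Matrix (Fin p × Fin d) (Fin p × Fin d) ℝ :=
  Matrix.of fun i j =>
    if (i.1 : ℕ) = 0 then B j.1 i.2 j.2
    else if (i.1 : ℕ) = (j.1 : ℕ) + 1 ∧ i.2 = j.2 then (1 : ℝ) else 0

/-- top-left d×d block of a dp×dp matrix, i.e. `(e₁ ⊗ I_d)ᵀ C (e₁ ⊗ I_d)`. -/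
def blockTL [NeZero p] (C : Matrix (Fin p × Fin d) (Fin p × Fin d) ℝ) :
    Matrix (Fin d) (Fin d) ℝ :=
  Matrix.of fun i k => C (0, i) (0, k)

/-- the stacked matrix `G̃(Ãd_u)` built from the network process at time `u`. -/
def GtildeAt {Ω : Type*} (G : Fin p → Matrix (Fin d) (Fin d) ℝ → Matrix (Fin d) (Fin d) ℝ)
    (Ad : ℤ → Ω → Matrix (Fin d) (Fin d) ℝ) (u : ℤ) (ω : Ω) :
    Matrix (Fin p × Fin d) (Fin p × Fin d) ℝ :=
  stacked (fun j => G j (Ad (u - (j : ℕ)) ω))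

/-- the moving-average coefficient
`B_{t,j} = (e₁⊗I_d)ᵀ ∏_{s=1}^j (Ã ⊙ G̃(Ãd_{t−s})) (e₁⊗I_d)`. -/
def Bcoef {Ω : Type*} [NeZero p] (A : Fin p → Matrix (Fin d) (Fin d) ℝ)
    (G : Fin p → Matrix (Fin d) (Fin d) ℝ → Matrix (Fin d) (Fin d) ℝ)
    (Ad : ℤ → Ω → Matrix (Fin d) (Fin d) ℝ) (t : ℤ) (j : ℕ) (ω : Ω) :
    Matrix (Fin d) (Fin d) ℝ :=
  blockTL (prodI (fun s => ((stacked A).hadamard (GtildeAt G Ad (t - s) ω))) j)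

end Stacked

/-! Entrywise, `|C₁ ⋯ Cⱼ| ≤ |C₁| ⋯ |Cⱼ| ≤ Aʲ`. Entrywise domination `|B| ≤ B'` bounds the spectral
norm because `|Bx| ≤ B'|x|` coordinatewise and `|x|` has the same Euclidean norm as `x`. -/

namespace Matrix

variable {ι κ ν R : Type*} [Fintype κ] [Ring R] [LinearOrder R] [IsOrderedRing R]

theorem abs_mulVec_apply_le {B B' : Matrix ι κ R} (hB : ∀ i k, |B i k| ≤ B' i k) (x : κ → R)
    (i : ι) : |(B *ᵥ x) i| ≤ (B' *ᵥ fun k => |x k|) i :=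
  calc |∑ k, B i k * x k| ≤ ∑ k, |B i k * x k| := Finset.abs_sum_le_sum_abs _ _
    _ ≤ ∑ k, B' i k * |x k| := Finset.sum_le_sum fun k _ => by
        rw [abs_mul]; exact mul_le_mul_of_nonneg_right (hB i k) (abs_nonneg _)

theorem abs_mul_apply_le {B B' : Matrix ι κ R} {C C' : Matrix κ ν R}
    (hB : ∀ i k, |B i k| ≤ B' i k) (hC : ∀ k l, |C k l| ≤ C' k l) (i : ι) (l : ν) :
    |(B * C) i l| ≤ (B' * C') i l :=
  calc |∑ k, B i k * C k l| ≤ ∑ k, |B i k * C k l| := Finset.abs_sum_le_sum_abs _ _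
    _ ≤ ∑ k, B' i k * C' k l := Finset.sum_le_sum fun k _ => by
        rw [abs_mul]
        exact mul_le_mul (hB i k) (hC k l) (abs_nonneg _) ((abs_nonneg _).trans (hB i k))

theorem abs_list_prod_apply_le_pow [DecidableEq κ] {A : Matrix κ κ R} {L : List (Matrix κ κ R)}
    (hL : ∀ M ∈ L, ∀ i l, |M i l| ≤ A i l) (i l : κ) : |L.prod i l| ≤ (A ^ L.length) i l := by
  induction L generalizing i l with
  | nil => by_cases h : i = l <;> simp [h]
  | cons M L ih =>
    rw [List.prod_cons, List.length_cons, pow_succ']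
    exact abs_mul_apply_le (hL M List.mem_cons_self)
      (ih fun N hN => hL N (List.mem_cons_of_mem _ hN)) i l

end Matrix

theorem EuclideanSpace.norm_le_norm_of_forall_norm_apply_le {ι 𝕜 : Type*} [Fintype ι] [RCLike 𝕜]
    {x y : EuclideanSpace 𝕜 ι} (h : ∀ i, ‖x i‖ ≤ ‖y i‖) : ‖x‖ ≤ ‖y‖ := by
  rw [EuclideanSpace.norm_eq, EuclideanSpace.norm_eq]
  gcongr with i
  exact h i

theorem sNorm_le_of_abs_le {n : Type*} [Fintype n] [DecidableEq n] {B B' : Matrix n n ℝ}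
    (h : ∀ i l, |B i l| ≤ B' i l) : sNorm B ≤ sNorm B' := by
  refine ContinuousLinearMap.opNorm_le_bound _ (norm_nonneg _) fun x => ?_
  set y : EuclideanSpace ℝ n := WithLp.toLp 2 fun i => |x i|
  have hy : ‖y‖ = ‖x‖ := le_antisymm
    (EuclideanSpace.norm_le_norm_of_forall_norm_apply_le fun i => by simp [y])
    (EuclideanSpace.norm_le_norm_of_forall_norm_apply_le fun i => by simp [y])
  calc ‖toEuclideanCLM (𝕜 := ℝ) B x‖ ≤ ‖toEuclideanCLM (𝕜 := ℝ) B' y‖ :=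
        EuclideanSpace.norm_le_norm_of_forall_norm_apply_le fun i =>
          (abs_mulVec_apply_le h x i).trans (le_abs_self _)
    _ ≤ sNorm B' * ‖y‖ := ContinuousLinearMap.le_opNorm _ _
    _ = sNorm B' * ‖x‖ := by rw [hy]

theorem stmt1_general {m : ℕ} (A : Matrix (Fin m) (Fin m) ℝ)
    (j : ℕ) (C : Fin j → Matrix (Fin m) (Fin m) ℝ)
    (hC : ∀ s i l, |C s i l| ≤ A i l) :
    sNorm (List.ofFn C).prod ≤ sNorm (A ^ j) := by
  have hprod := abs_list_prod_apply_le_pow (A := A) (L := List.ofFn C) fun M hM => by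
    obtain ⟨s, rfl⟩ := List.mem_ofFn.mp hM
    exact hC s
  rw [List.length_ofFn] at hprod
  exact sNorm_le_of_abs_le hprod

/-- If `A` is a nonnegative m×m matrix and `C_1, …, C_j` satisfy
`|C_s| ≤ A` entrywise, then `‖C_1 ⋯ C_j‖₂ ≤ ‖A^j‖₂` (spectral norms). -/
theorem stmt1 {m : ℕ} (A : Matrix (Fin m) (Fin m) ℝ)
    (hA : ∀ i l, 0 ≤ A i l)
    (j : ℕ) (C : Fin j → Matrix (Fin m) (Fin m) ℝ)
    (hC : ∀ s i l, |C s i l| ≤ A i l) :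
    sNorm (List.ofFn C).prod ≤ sNorm (A ^ j) :=
  stmt1_general A j C hC
end
end

section
/- Let X_t = Ad_{t−1} ε_{t−1} + ε_t be a network moving average process of order 1, where the processes {Ad_t} and {ε_t} are mutually independent. Then for every lag h ≥ 2, the autocovariance function of X equals Γ_X(h) = Cov(Ad_{h−1}μ, Ad_{−1}μ) = E[(Ad_{h−1}μ)(Ad_{−1}μ)ᵀ] − (E(Ad_0)μ)(E(Ad_0)μ)ᵀ; in particular, Γ_X(h) for h ≥ 2 is determined entirely by the linear dependence structure of the network process Ad and vanishes whenever μ = 0. -/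
noncomputable section
open MeasureTheory ProbabilityTheory Filter Matrix Topology

/-!
For a fixed realisation of the network, `X_s` and `X_t` with `t + 2 ≤ s` are linear forms in the
disjoint blocks `(ε_{s-1}, ε_s)` and `(ε_{t-1}, ε_t)` of innovations. Expanding `X_s X_t` thus only
produces terms `f(Ad) ε_u ε_v` with `u ≠ v` and a bounded `f`, whose expectation is `E f(Ad) · μ μ`
by independence. Hence every innovation may be replaced by its mean `μ`, which turns `X_t` into
`Ad_{t-1} μ + μ`, and the constant `μ` does not change covariances.
-/

structure PairwiseIndepWithMean {Ω n : Type*} [MeasurableSpace Ω] (P : Measure Ω)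
    (ε : ℤ → Ω → n → ℝ) (μ : n → ℝ) : Prop where
  indepFun : ∀ ⦃u v : ℤ⦄, u ≠ v → IndepFun (ε u) (ε v) P
  integrable : ∀ t i, Integrable (fun ω => ε t ω i) P
  integral_eq : ∀ t i, ∫ ω, ε t ω i ∂P = μ i

namespace PairwiseIndepWithMean

variable {Ω n : Type*} [MeasurableSpace Ω] {P : Measure Ω} {ε : ℤ → Ω → n → ℝ} {μ : n → ℝ}

lemma integrable_mul (h : PairwiseIndepWithMean P ε μ) {u v : ℤ} (huv : u ≠ v) (i j : n) :
    Integrable (fun ω => ε u ω i * ε v ω j) P :=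
  ((h.indepFun huv).comp (measurable_pi_apply i) (measurable_pi_apply j)).integrable_mul
    (h.integrable u i) (h.integrable v j)

lemma integral_mul (h : PairwiseIndepWithMean P ε μ) {u v : ℤ} (huv : u ≠ v) (i j : n) :
    ∫ ω, ε u ω i * ε v ω j ∂P = μ i * μ j := by
  rw [← h.integral_eq u i, ← h.integral_eq v j]
  exact ((h.indepFun huv).comp (measurable_pi_apply i) (measurable_pi_apply j))
    |>.integral_fun_mul_eq_mul_integral (h.integrable u i).1 (h.integrable v j).1

end PairwiseIndepWithMean

lemma IID.identDistrib {Ω α : Type*} [MeasurableSpace Ω] [MeasurableSpace α] {P : Measure Ω}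
    {Z : ℤ → Ω → α} (h : IID P Z) (t : ℤ) : IdentDistrib (Z t) (Z 0) P P :=
  ⟨(h.1 t).aemeasurable, (h.1 0).aemeasurable, h.2.2 t⟩

lemma IID.pairwiseIndepWithMean {Ω n : Type*} [MeasurableSpace Ω] {P : Measure Ω}
    {ε : ℤ → Ω → n → ℝ} {μ : n → ℝ} (h : IID P ε)
    (hint : ∀ i, Integrable (fun ω => ε 0 ω i) P) (hmean : ∀ i, ∫ ω, ε 0 ω i ∂P = μ i) :
    PairwiseIndepWithMean P ε μ where
  indepFun _ _ huv := h.2.1.indepFun huv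
  integrable t i := ((h.identDistrib t).comp (measurable_pi_apply i)).integrable_iff.2 (hint i)
  integral_eq t i := ((h.identDistrib t).comp (measurable_pi_apply i)).integral_eq.trans (hmean i)

lemma StrictlyStationary.identDistrib {Ω α : Type*} [MeasurableSpace Ω] [MeasurableSpace α]
    {P : Measure Ω} {Z : ℤ → Ω → α} (h : StrictlyStationary P Z) (hZ : ∀ t, Measurable (Z t))
    (t : ℤ) : IdentDistrib (Z t) (Z 0) P P where
  aemeasurable_fst := (hZ t).aemeasurable
  aemeasurable_snd := (hZ 0).aemeasurable
  map_eq := by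
    have h1 := congrArg (Measure.map fun v : Fin 1 → α => v 0) (h t 1 fun _ => 0)
    rwa [Measure.map_map (measurable_pi_apply 0) (measurable_pi_lambda _ fun _ => hZ _),
      Measure.map_map (measurable_pi_apply 0) (measurable_pi_lambda _ fun _ => hZ _),
      zero_add] at h1

lemma integral_mulVec_apply {Ω n : Type*} [MeasurableSpace Ω] [Fintype n] {P : Measure Ω}
    {M : Ω → Matrix n n ℝ} (hM : ∀ i j, Integrable (fun ω => M ω i j) P) (v : n → ℝ) (a : n) :
    ∫ ω, (M ω *ᵥ v) a ∂P = ((of fun i j => ∫ ω, M ω i j ∂P) *ᵥ v) a := by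
  simp only [mulVec, dotProduct, of_apply]
  rw [integral_finsetSum _ fun i _ => (hM a i).mul_const _]
  simp only [integral_mul_const]

lemma StrictlyStationary.integral_mulVec_apply {Ω n : Type*} [MeasurableSpace Ω] [Fintype n]
    {P : Measure Ω} {Z : ℤ → Ω → Matrix n n ℝ} (h : StrictlyStationary P Z)
    (hZ : ∀ t, Measurable (Z t)) (hint : ∀ i j, Integrable (fun ω => Z 0 ω i j) P) (t : ℤ)
    (v : n → ℝ) (a : n) :
    ∫ ω, (Z t ω *ᵥ v) a ∂P = ((of fun i j => ∫ ω, Z 0 ω i j ∂P) *ᵥ v) a := by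
  rw [← _root_.integral_mulVec_apply hint]
  refine ((h.identDistrib hZ t).comp (u := fun M : Matrix n n ℝ => (M *ᵥ v) a) ?_).integral_eq
  simp only [mulVec, dotProduct]
  fun_prop

lemma mulVec_apply_mul_mulVec_apply {n : Type*} [Fintype n] (M N : Matrix n n ℝ) (x y : n → ℝ)
    (a b : n) : (M *ᵥ x) a * (N *ᵥ y) b = ∑ p : n × n, M a p.1 * N b p.2 * (x p.1 * y p.2) := by
  rw [Fintype.sum_prod_type' fun i j => M a i * N b j * (x i * y j)]
  simp only [mulVec, dotProduct, Finset.sum_mul_sum]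
  exact Finset.sum_congr rfl fun _ _ => Finset.sum_congr rfl fun _ _ => by ring

lemma covR_add_const {Ω : Type*} [MeasurableSpace Ω] {P : Measure Ω} [IsProbabilityMeasure P]
    {U V : Ω → ℝ} (hU : Integrable U P) (hV : Integrable V P)
    (hUV : Integrable (fun ω => U ω * V ω) P) (c d : ℝ) :
    covR P (fun ω => U ω + c) (fun ω => V ω + d) = covR P U V := by
  have hexpand : ∀ ω, (U ω + c) * (V ω + d) = U ω * V ω + d * U ω + c * V ω + c * d :=
    fun ω => by ring
  have hUc : ∫ ω, U ω + c ∂P = ∫ ω, U ω ∂P + c := by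
    simp [integral_add hU (integrable_const c)]
  have hVd : ∫ ω, V ω + d ∂P = ∫ ω, V ω ∂P + d := by
    simp [integral_add hV (integrable_const d)]
  have hUV' : ∫ ω, (U ω + c) * (V ω + d) ∂P =
      ∫ ω, U ω * V ω ∂P + d * ∫ ω, U ω ∂P + c * ∫ ω, V ω ∂P + c * d := by
    have h1 : Integrable (fun ω => U ω * V ω + d * U ω) P := hUV.add (hU.const_mul d)
    have h2 : Integrable (fun ω => U ω * V ω + d * U ω + c * V ω) P := h1.add (hV.const_mul c)
    simp only [hexpand]
    rw [integral_add h2 (integrable_const _), integral_add h1 (hV.const_mul c),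
      integral_add hUV (hU.const_mul d), integral_const_mul, integral_const_mul]
    simp
  rw [covR, covR, hUc, hVd, hUV']
  ring

section RandomCoefficients

variable {Ω α n : Type*} [MeasurableSpace Ω] [MeasurableSpace α] {P : Measure Ω}
  {Y : Ω → α} {ε : ℤ → Ω → n → ℝ} {μ : n → ℝ}

lemma integral_comp_mul_apply (hY : Measurable Y) (hind : IndepFun Y (fun ω t => ε t ω) P)
    (hε : PairwiseIndepWithMean P ε μ) {f : α → ℝ} (hf : Measurable f) (u : ℤ) (i : n) :
    ∫ ω, f (Y ω) * ε u ω i ∂P = (∫ ω, f (Y ω) ∂P) * μ i := by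
  rw [← hε.integral_eq u i]
  exact (hind.comp hf (by fun_prop : Measurable fun e : ℤ → n → ℝ => e u i))
    |>.integral_fun_mul_eq_mul_integral (hf.comp hY).aestronglyMeasurable (hε.integrable u i).1

lemma integral_comp_mul_apply_mul_apply (hY : Measurable Y)
    (hind : IndepFun Y (fun ω t => ε t ω) P) (hε : PairwiseIndepWithMean P ε μ) {f : α → ℝ}
    (hf : Measurable f) {u v : ℤ} (huv : u ≠ v) (i j : n) :
    ∫ ω, f (Y ω) * (ε u ω i * ε v ω j) ∂P = (∫ ω, f (Y ω) ∂P) * (μ i * μ j) := by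
  rw [← hε.integral_mul huv i j]
  exact (hind.comp hf (by fun_prop : Measurable fun e : ℤ → n → ℝ => e u i * e v j))
    |>.integral_fun_mul_eq_mul_integral (hf.comp hY).aestronglyMeasurable
      (hε.integrable_mul huv i j).1

variable [Fintype n]

lemma integrable_mulVec_apply {M : Ω → Matrix n n ℝ} {x : Ω → n → ℝ} {C : ℝ}
    (hM : ∀ i j, AEStronglyMeasurable (fun ω => M ω i j) P) (hMC : ∀ ω i j, |M ω i j| ≤ C)
    (hx : ∀ i, Integrable (fun ω => x ω i) P) (a : n) :
    Integrable (fun ω => (M ω *ᵥ x ω) a) P :=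
  integrable_finsetSum _ fun i _ => (hx i).bdd_mul (hM a i) (ae_of_all _ fun ω => hMC ω a i)

lemma integrable_mulVec_apply_mul {M N : Ω → Matrix n n ℝ} {x y : Ω → n → ℝ} {C D : ℝ}
    (hM : ∀ i j, AEStronglyMeasurable (fun ω => M ω i j) P) (hMC : ∀ ω i j, |M ω i j| ≤ C)
    (hN : ∀ i j, AEStronglyMeasurable (fun ω => N ω i j) P) (hND : ∀ ω i j, |N ω i j| ≤ D)
    (hxy : ∀ i j, Integrable (fun ω => x ω i * y ω j) P) (a b : n) :
    Integrable (fun ω => (M ω *ᵥ x ω) a * (N ω *ᵥ y ω) b) P := by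
  simp only [mulVec_apply_mul_mulVec_apply]
  exact integrable_finsetSum _ fun p _ => (hxy p.1 p.2).bdd_mul ((hM a p.1).mul (hN b p.2))
    (ae_of_all _ fun ω => norm_mul_le_of_le (hMC ω a p.1) (hND ω b p.2))

variable [IsFiniteMeasure P]

lemma integral_mulVec_apply_eq (hY : Measurable Y) (hind : IndepFun Y (fun ω t => ε t ω) P)
    (hε : PairwiseIndepWithMean P ε μ) {F : α → Matrix n n ℝ} (hF : Measurable F) {C : ℝ}
    (hFC : ∀ ω i j, |F (Y ω) i j| ≤ C) (u : ℤ) (a : n) :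
    ∫ ω, (F (Y ω) *ᵥ ε u ω) a ∂P = ∫ ω, (F (Y ω) *ᵥ μ) a ∂P := by
  have hFY : ∀ i, AEStronglyMeasurable (fun ω => F (Y ω) a i) P := fun i =>
    (by fun_prop : Measurable fun ω => F (Y ω) a i).aestronglyMeasurable
  simp only [mulVec, dotProduct]
  rw [integral_finsetSum _ fun i _ => (hε.integrable u i).bdd_mul (hFY i)
      (ae_of_all _ fun ω => hFC ω a i),
    integral_finsetSum _ fun i _ => (integrable_const (μ i)).bdd_mul (hFY i)
      (ae_of_all _ fun ω => hFC ω a i)]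
  refine Finset.sum_congr rfl fun i _ => ?_
  rw [integral_comp_mul_apply hY hind hε (f := fun y => F y a i) (by fun_prop), integral_mul_const]

lemma integral_mulVec_apply_mul_mulVec_apply (hY : Measurable Y)
    (hind : IndepFun Y (fun ω t => ε t ω) P) (hε : PairwiseIndepWithMean P ε μ)
    {F G : α → Matrix n n ℝ} (hF : Measurable F) (hG : Measurable G) {C D : ℝ}
    (hFC : ∀ ω i j, |F (Y ω) i j| ≤ C) (hGD : ∀ ω i j, |G (Y ω) i j| ≤ D) {u v : ℤ}
    (huv : u ≠ v) (a b : n) :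
    ∫ ω, (F (Y ω) *ᵥ ε u ω) a * (G (Y ω) *ᵥ ε v ω) b ∂P =
      ∫ ω, (F (Y ω) *ᵥ μ) a * (G (Y ω) *ᵥ μ) b ∂P := by
  have hFGY : ∀ p : n × n, AEStronglyMeasurable (fun ω => F (Y ω) a p.1 * G (Y ω) b p.2) P :=
    fun p => (by fun_prop : Measurable fun ω => F (Y ω) a p.1 * G (Y ω) b p.2).aestronglyMeasurable
  have hFGC : ∀ p : n × n, ∀ᵐ ω ∂P, ‖F (Y ω) a p.1 * G (Y ω) b p.2‖ ≤ C * D := fun p =>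
    ae_of_all _ fun ω => norm_mul_le_of_le (hFC ω a p.1) (hGD ω b p.2)
  simp only [mulVec_apply_mul_mulVec_apply]
  rw [integral_finsetSum _ fun p _ => (hε.integrable_mul huv p.1 p.2).bdd_mul (hFGY p) (hFGC p),
    integral_finsetSum _ fun p _ => (integrable_const _).bdd_mul (hFGY p) (hFGC p)]
  refine Finset.sum_congr rfl fun p _ => ?_
  rw [integral_comp_mul_apply_mul_apply hY hind hε (f := fun y => F y a p.1 * G y b p.2)
    (by fun_prop) huv, integral_mul_const]

variable {K L : Type*} [Fintype K] [Fintype L]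

lemma integral_sum_mulVec_apply_eq (hY : Measurable Y) (hind : IndepFun Y (fun ω t => ε t ω) P)
    (hε : PairwiseIndepWithMean P ε μ) {F : K → α → Matrix n n ℝ} (hF : ∀ k, Measurable (F k))
    {C : ℝ} (hFC : ∀ k ω i j, |F k (Y ω) i j| ≤ C) (u : K → ℤ) (a : n) :
    ∫ ω, (∑ k, F k (Y ω) *ᵥ ε (u k) ω) a ∂P = ∫ ω, (∑ k, F k (Y ω) *ᵥ μ) a ∂P := by
  have hFY : ∀ k i j, AEStronglyMeasurable (fun ω => F k (Y ω) i j) P := fun k i j =>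
    (by fun_prop : Measurable fun ω => F k (Y ω) i j).aestronglyMeasurable
  simp only [Finset.sum_apply]
  rw [integral_finsetSum _ fun k _ =>
      integrable_mulVec_apply (hFY k) (hFC k) (hε.integrable (u k)) a,
    integral_finsetSum _ fun k _ =>
      integrable_mulVec_apply (hFY k) (hFC k) (fun i => integrable_const (μ i)) a]
  exact Finset.sum_congr rfl fun k _ => integral_mulVec_apply_eq hY hind hε (hF k) (hFC k) (u k) a

lemma integral_sum_mulVec_apply_mul_sum_mulVec_apply (hY : Measurable Y)
    (hind : IndepFun Y (fun ω t => ε t ω) P) (hε : PairwiseIndepWithMean P ε μ)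
    {F : K → α → Matrix n n ℝ} {G : L → α → Matrix n n ℝ} (hF : ∀ k, Measurable (F k))
    (hG : ∀ l, Measurable (G l)) {C D : ℝ} (hFC : ∀ k ω i j, |F k (Y ω) i j| ≤ C)
    (hGD : ∀ l ω i j, |G l (Y ω) i j| ≤ D) {u : K → ℤ} {v : L → ℤ} (huv : ∀ k l, u k ≠ v l)
    (a b : n) :
    ∫ ω, (∑ k, F k (Y ω) *ᵥ ε (u k) ω) a * (∑ l, G l (Y ω) *ᵥ ε (v l) ω) b ∂P =
      ∫ ω, (∑ k, F k (Y ω) *ᵥ μ) a * (∑ l, G l (Y ω) *ᵥ μ) b ∂P := by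
  have hFY : ∀ k i j, AEStronglyMeasurable (fun ω => F k (Y ω) i j) P := fun k i j =>
    (by fun_prop : Measurable fun ω => F k (Y ω) i j).aestronglyMeasurable
  have hGY : ∀ l i j, AEStronglyMeasurable (fun ω => G l (Y ω) i j) P := fun l i j =>
    (by fun_prop : Measurable fun ω => G l (Y ω) i j).aestronglyMeasurable
  simp only [Finset.sum_apply, Finset.sum_mul_sum, ← Fintype.sum_prod_type']
  rw [integral_finsetSum _ fun p _ => integrable_mulVec_apply_mul (hFY p.1) (hFC p.1) (hGY p.2)
      (hGD p.2) (hε.integrable_mul (huv p.1 p.2)) a b,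
    integral_finsetSum _ fun p _ => integrable_mulVec_apply_mul (hFY p.1) (hFC p.1) (hGY p.2)
      (hGD p.2) (fun i j => integrable_const (μ i * μ j)) a b]
  exact Finset.sum_congr rfl fun p _ => integral_mulVec_apply_mul_mulVec_apply hY hind hε
    (hF p.1) (hG p.2) (hFC p.1) (hGD p.2) (huv p.1 p.2) a b

end RandomCoefficients

section NetworkMovingAverage

variable {Ω n : Type*} [Fintype n] [DecidableEq n]

def nma1Coef (t : ℤ) : Fin 2 → (ℤ → Matrix n n ℝ) → Matrix n n ℝ :=
  ![fun A => A (t - 1), fun _ => 1]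

lemma nma1_eq_sum {Ad : ℤ → Ω → Matrix n n ℝ} {ε X : ℤ → Ω → n → ℝ}
    (hX : ∀ t ω, X t ω = Ad (t - 1) ω *ᵥ ε (t - 1) ω + ε t ω) (t : ℤ) (ω : Ω) :
    X t ω = ∑ k, nma1Coef t k (fun s => Ad s ω) *ᵥ ε (t - 1 + k) ω := by
  simp [nma1Coef, Fin.sum_univ_two, hX]

lemma sum_nma1Coef_mulVec (t : ℤ) (A : ℤ → Matrix n n ℝ) (v : n → ℝ) :
    ∑ k, nma1Coef t k A *ᵥ v = A (t - 1) *ᵥ v + v := by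
  simp [nma1Coef, Fin.sum_univ_two]

theorem covR_nma1_eq [MeasurableSpace Ω] {P : Measure Ω} [IsProbabilityMeasure P]
    {Ad : ℤ → Ω → Matrix n n ℝ} {ε X : ℤ → Ω → n → ℝ} {μ : n → ℝ}
    (hAd : ∀ t, Measurable (Ad t)) {C : ℝ} (hAdC : ∀ t ω i j, |Ad t ω i j| ≤ C)
    (hind : IndepFun (fun ω t => Ad t ω) (fun ω t => ε t ω) P)
    (hε : PairwiseIndepWithMean P ε μ)
    (hX : ∀ t ω, X t ω = Ad (t - 1) ω *ᵥ ε (t - 1) ω + ε t ω) {s t : ℤ} (hst : t + 2 ≤ s)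
    (a b : n) :
    covR P (fun ω => X s ω a) (fun ω => X t ω b) =
      covR P (fun ω => (Ad (s - 1) ω *ᵥ μ) a) (fun ω => (Ad (t - 1) ω *ᵥ μ) b) := by
  have hY : Measurable fun ω t => Ad t ω := measurable_pi_lambda _ hAd
  have hΘ : ∀ r k, Measurable (nma1Coef (n := n) r k) := fun r =>
    Fin.forall_fin_two.2 ⟨measurable_pi_apply (r - 1), measurable_const⟩
  have hΘC : ∀ r k ω i j, |nma1Coef r k (fun t => Ad t ω) i j| ≤ max C 1 := by
    intro r
    refine Fin.forall_fin_two.2 ⟨fun ω i j => (hAdC _ ω i j).trans (le_max_left _ _),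
      fun ω i j => ?_⟩
    rw [nma1Coef, Matrix.cons_val_one, Matrix.cons_val_zero, one_apply]
    split_ifs <;> simp
  have hdisj : ∀ k l : Fin 2, s - 1 + k ≠ t - 1 + l := fun k l => by omega
  have hAdY : ∀ r i j, AEStronglyMeasurable (fun ω => Ad r ω i j) P := fun r i j =>
    (by fun_prop : Measurable fun ω => Ad r ω i j).aestronglyMeasurable
  calc covR P (fun ω => X s ω a) (fun ω => X t ω b)
      = covR P (fun ω => (∑ k, nma1Coef s k (fun r => Ad r ω) *ᵥ ε (s - 1 + k) ω) a)
          (fun ω => (∑ l, nma1Coef t l (fun r => Ad r ω) *ᵥ ε (t - 1 + l) ω) b) := by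
        simp only [nma1_eq_sum hX]
    _ = covR P (fun ω => (∑ k, nma1Coef s k (fun r => Ad r ω) *ᵥ μ) a)
          (fun ω => (∑ l, nma1Coef t l (fun r => Ad r ω) *ᵥ μ) b) := by
        rw [covR, covR, integral_sum_mulVec_apply_mul_sum_mulVec_apply hY hind hε (hΘ s) (hΘ t)
          (hΘC s) (hΘC t) hdisj, integral_sum_mulVec_apply_eq hY hind hε (hΘ s) (hΘC s),
          integral_sum_mulVec_apply_eq hY hind hε (hΘ t) (hΘC t)]
    _ = covR P (fun ω => (Ad (s - 1) ω *ᵥ μ) a + μ a) (fun ω => (Ad (t - 1) ω *ᵥ μ) b + μ b) := by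
        simp only [sum_nma1Coef_mulVec, Pi.add_apply]
    _ = _ := covR_add_const (integrable_mulVec_apply (hAdY _) (hAdC _)
          (fun i => integrable_const (μ i)) a) (integrable_mulVec_apply (hAdY _) (hAdC _)
          (fun i => integrable_const (μ i)) b) (integrable_mulVec_apply_mul (hAdY _) (hAdC _)
          (hAdY _) (hAdC _) (fun i j => integrable_const (μ i * μ j)) a b) _ _

end NetworkMovingAverage

theorem stmt3_general {d : ℕ}
    {Ω : Type*} [MeasurableSpace Ω] (P : Measure Ω) [IsProbabilityMeasure P]
    (Ad : ℤ → Ω → Matrix (Fin d) (Fin d) ℝ)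
    (ε : ℤ → Ω → (Fin d → ℝ)) (μ : Fin d → ℝ)
    (X : ℤ → Ω → (Fin d → ℝ))
    -- the network process: measurable, `[−1,1]`-valued, strictly stationary
    (hAdmeas : ∀ t, Measurable (Ad t))
    (hAdval : ∀ t ω a b, Ad t ω a b ∈ Set.Icc (-1 : ℝ) 1)
    (hAdstat : StrictlyStationary P Ad)
    -- the innovations: i.i.d., mean `μ`, square integrable
    (hiid : IID P ε)
    (hmean : ∀ a, ∫ ω, ε 0 ω a ∂P = μ a)
    (hL2 : ∀ a, MemLp (fun ω => ε 0 ω a) 2 P)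
    -- `{Ad_t}` and `{ε_t}` are mutually independent
    (hindep : IndepFun (fun ω (t : ℤ) => Ad t ω) (fun ω (t : ℤ) => ε t ω) P)
    -- the NMA(1) model
    (hX : ∀ t ω, X t ω = Ad (t - 1) ω *ᵥ ε (t - 1) ω + ε t ω) :
    ∀ h : ℕ, 2 ≤ h → ∀ a b : Fin d,
      (covR P (fun ω => X (h : ℤ) ω a) (fun ω => X 0 ω b) =
        covR P (fun ω => (Ad ((h : ℤ) - 1) ω *ᵥ μ) a)
               (fun ω => (Ad (-1) ω *ᵥ μ) b)) ∧
      (covR P (fun ω => X (h : ℤ) ω a) (fun ω => X 0 ω b) =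
        (∫ ω, (Ad ((h : ℤ) - 1) ω *ᵥ μ) a * (Ad (-1) ω *ᵥ μ) b ∂P) -
          ((Matrix.of fun i k => ∫ ω, Ad 0 ω i k ∂P) *ᵥ μ) a *
          ((Matrix.of fun i k => ∫ ω, Ad 0 ω i k ∂P) *ᵥ μ) b) ∧
      (μ = 0 → covR P (fun ω => X (h : ℤ) ω a) (fun ω => X 0 ω b) = 0) := by
  intro h hh a b
  have hAdC : ∀ t ω i j, |Ad t ω i j| ≤ 1 := fun t ω i j => abs_le.2 (hAdval t ω i j)
  have hε := hiid.pairwiseIndepWithMean (fun i => (hL2 i).integrable one_le_two) hmean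
  have hcov := covR_nma1_eq hAdmeas hAdC hindep hε hX (s := h) (t := 0) (by omega) a b
  rw [zero_sub] at hcov
  have hmeanAd := hAdstat.integral_mulVec_apply hAdmeas fun i j =>
    Integrable.of_bound (by fun_prop : Measurable fun ω => Ad 0 ω i j).aestronglyMeasurable 1
      (ae_of_all _ fun ω => hAdC 0 ω i j)
  refine ⟨hcov, by rw [hcov, covR, hmeanAd, hmeanAd], fun hμ => ?_⟩
  rw [hcov, hμ]
  simp [covR]

/-- For the network moving average process of order 1,
`X_t = Ad_{t−1} ε_{t−1} + ε_t`, with `{Ad_t}` and `{ε_t}` mutually independent,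
the autocovariance at every lag `h ≥ 2` is
`Γ_X(h) = Cov(Ad_{h−1}μ, Ad_{−1}μ)
        = E[(Ad_{h−1}μ)(Ad_{−1}μ)ᵀ] − (E(Ad_0)μ)(E(Ad_0)μ)ᵀ`,
and it vanishes whenever `μ = 0`. -/
theorem stmt3 {d : ℕ} (hd : 0 < d)
    {Ω : Type*} [MeasurableSpace Ω] (P : Measure Ω) [IsProbabilityMeasure P]
    (Ad : ℤ → Ω → Matrix (Fin d) (Fin d) ℝ)
    (ε : ℤ → Ω → (Fin d → ℝ)) (μ : Fin d → ℝ)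
    (X : ℤ → Ω → (Fin d → ℝ))
    -- the network process: measurable, `[−1,1]`-valued, strictly stationary
    (hAdmeas : ∀ t, Measurable (Ad t))
    (hAdval : ∀ t ω a b, Ad t ω a b ∈ Set.Icc (-1 : ℝ) 1)
    (hAdstat : StrictlyStationary P Ad)
    -- the innovations: i.i.d., mean `μ`, square integrable,
    -- positive definite covariance
    (hiid : IID P ε)
    (hmean : ∀ a, ∫ ω, ε 0 ω a ∂P = μ a)
    (hL2 : ∀ a, MemLp (fun ω => ε 0 ω a) 2 P)
    (hPosDef : (Matrix.of fun a b =>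
        covR P (fun ω => ε 0 ω a) (fun ω => ε 0 ω b)).PosDef)
    -- `{Ad_t}` and `{ε_t}` are mutually independent
    (hindep : IndepFun (fun ω (t : ℤ) => Ad t ω) (fun ω (t : ℤ) => ε t ω) P)
    -- the NMA(1) model
    (hX : ∀ t ω, X t ω = Ad (t - 1) ω *ᵥ ε (t - 1) ω + ε t ω) :
    ∀ h : ℕ, 2 ≤ h → ∀ a b : Fin d,
      (covR P (fun ω => X (h : ℤ) ω a) (fun ω => X 0 ω b) =
        covR P (fun ω => (Ad ((h : ℤ) - 1) ω *ᵥ μ) a)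
               (fun ω => (Ad (-1) ω *ᵥ μ) b)) ∧
      (covR P (fun ω => X (h : ℤ) ω a) (fun ω => X 0 ω b) =
        (∫ ω, (Ad ((h : ℤ) - 1) ω *ᵥ μ) a * (Ad (-1) ω *ᵥ μ) b ∂P) -
          ((Matrix.of fun i k => ∫ ω, Ad 0 ω i k ∂P) *ᵥ μ) a *
          ((Matrix.of fun i k => ∫ ω, Ad 0 ω i k ∂P) *ᵥ μ) b) ∧
      (μ = 0 → covR P (fun ω => X (h : ℤ) ω a) (fun ω => X 0 ω b) = 0) :=
  stmt3_general P Ad ε μ X hAdmeas hAdval hAdstat hiid hmean hL2 hindep hX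
end
end

section
/- Under Assumption 2, the least squares estimators for each component r = 1, …, d are √n-consistent: μ̂_r = μ_r + O_P(1/√n) and ŵ_r = w_r + O_P(1/√n), i.e., the sequences √n(μ̂_r − μ_r) and √n(ŵ_r − w_r) are bounded in probability as n → ∞ (d and p fixed). -/
noncomputable section
open MeasureTheory ProbabilityTheory Filter Matrix Topology

/-- the regressor vector `Y_s^{(r)}`: entry `(j,i)` equals
`(e_rᵀ G_{j+1}(Ad_{s−j})) e_i · X_{s−j;i}` (lag `j+1`). -/
def Yreg {d p : ℕ} {Ω : Type*}
    (G : Fin p → Matrix (Fin d) (Fin d) ℝ → Matrix (Fin d) (Fin d) ℝ)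
    (Ad : ℤ → Ω → Matrix (Fin d) (Fin d) ℝ) (X : ℤ → Ω → (Fin d → ℝ))
    (r : Fin d) (s : ℤ) (ji : Fin p × Fin d) (ω : Ω) : ℝ :=
  G ji.1 (Ad (s - (ji.1 : ℕ)) ω) r ji.2 * X (s - (ji.1 : ℕ)) ω ji.2


/-!
For each component `r`, the estimator is ordinary least squares on the regressor
`z_{t-1} = (Y_{t-1}^{(r)}, 1)`. Hence the estimation error `θ = (w_r - ŵ_r, μ_r - μ̂_r)` solves
the normal equations `(M + R_n) θ = b_n`, where `M = E[z zᵀ]` is invertible because its Schur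
complement is `Γ_{Y(r)}(0)`, `R_n` is the deviation of the sample second moments of `z` from `M`,
and `b_n` is (minus) the sample cross moment of `z` with the centred innovations.
Assumption 2 makes every entry of `R_n` and `b_n` of order `O_P(1/√n)`; restricting the sums to
the window `p < t ≤ n` costs only a shift `n ↦ n - 1` and a term of order `1/n`. Finally
`‖θ‖ ≤ ‖M⁻¹‖ (‖b_n‖ + ‖R_n‖ ‖θ‖)`, and `‖R_n‖ → 0`, force `θ = O_P(1/√n)`.
-/

section LeastSquares

theorem eq_zero_of_forall_two_mul_le {A B : ℝ} (hA : 0 ≤ A)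
    (h : ∀ s : ℝ, 2 * s * B ≤ s ^ 2 * A) : B = 0 := by
  obtain ⟨s, rfl⟩ : ∃ s, B = s * (A + 1) := ⟨B / (A + 1), by field_simp⟩
  have hs : s ^ 2 * (A + 2) ≤ 0 := by nlinarith [h s]
  have : s = 0 := by nlinarith [sq_nonneg s]
  rw [this, zero_mul]

theorem sum_mul_eq_zero_of_forall_sum_sq_le {ι : Type*} (T : Finset ι) (e u : ι → ℝ)
    (h : ∀ s : ℝ, ∑ t ∈ T, e t ^ 2 ≤ ∑ t ∈ T, (e t - s * u t) ^ 2) :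
    ∑ t ∈ T, e t * u t = 0 := by
  refine eq_zero_of_forall_two_mul_le (A := ∑ t ∈ T, u t ^ 2)
    (Finset.sum_nonneg fun t _ => sq_nonneg (u t)) fun s => ?_
  have hexpand : ∑ t ∈ T, (e t - s * u t) ^ 2 =
      ∑ t ∈ T, e t ^ 2 - 2 * s * ∑ t ∈ T, e t * u t + s ^ 2 * ∑ t ∈ T, u t ^ 2 := by
    simp only [Finset.mul_sum, ← Finset.sum_sub_distrib, ← Finset.sum_add_distrib]
    exact Finset.sum_congr rfl fun _ _ => by ring
  linarith [h s]

theorem mulVec_sub_eq_of_isLeastSquares {ι κ : Type*} [Fintype κ] (T : Finset ι)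
    (z : ι → κ → ℝ) (y η : ι → ℝ) (θ₀ θ : κ → ℝ) (hy : ∀ t ∈ T, y t = z t ⬝ᵥ θ₀ + η t)
    (hmin : ∀ θ', ∑ t ∈ T, (y t - z t ⬝ᵥ θ) ^ 2 ≤ ∑ t ∈ T, (y t - z t ⬝ᵥ θ') ^ 2) :
    (∑ t ∈ T, vecMulVec (z t) (z t)) *ᵥ (θ₀ - θ) = -∑ t ∈ T, η t • z t := by
  classical
  ext i
  have hfoc := sum_mul_eq_zero_of_forall_sum_sq_le T (fun t => y t - z t ⬝ᵥ θ) (fun t => z t i)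
    fun s => (hmin (θ + s • Pi.single i 1)).trans_eq <| Finset.sum_congr rfl fun t _ => by
      rw [dotProduct_add, dotProduct_smul, dotProduct_single, smul_eq_mul, mul_one, ← sub_sub,
        mul_comm]
  simp only [sum_mulVec, vecMulVec_mulVec, Finset.sum_apply, Pi.neg_apply, Pi.smul_apply,
    smul_eq_mul, MulOpposite.smul_eq_mul_unop, MulOpposite.unop_op]
  rw [Finset.sum_congr rfl fun t ht => show z t i * z t ⬝ᵥ (θ₀ - θ) =
      (y t - z t ⬝ᵥ θ) * z t i - η t * z t i by rw [hy t ht, dotProduct_sub]; ring,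
    Finset.sum_sub_distrib, hfoc, zero_sub]

theorem sum_mul_add_eq_dotProduct_sumElim {ι : Type*} [Fintype ι] {S : Finset ι} {w : ι → ℝ}
    (hw : ∀ i ∉ S, w i = 0) (y : ι → ℝ) (m : ℝ) :
    ∑ i, w i * y i + m =
      ((fun a : S => y a) ⊕ᵥ 1) ⬝ᵥ ((fun a : S => w a) ⊕ᵥ fun _ : Unit => m) := by
  have hS : ∑ i, w i * y i = ∑ a : S, y a * w a := by
    rw [Finset.sum_coe_sort S fun i => y i * w i]
    refine (Finset.sum_subset (Finset.subset_univ S) fun i _ hi => ?_).symm.trans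
      (Finset.sum_congr rfl fun _ _ => mul_comm _ _)
    rw [hw i hi, zero_mul]
  simp [dotProduct, Fintype.sum_sum_type, hS]

end LeastSquares

namespace SqrtNBddInProb

variable {Ω : Type*} [MeasurableSpace Ω] {P : Measure Ω}

theorem zero : SqrtNBddInProb P (fun _ _ => 0) :=
  fun _ hδ => ⟨0, Eventually.of_forall fun _ => by simpa using hδ.le⟩

variable [IsFiniteMeasure P] {Z W V : ℕ → Ω → ℝ}

theorem of_subset_union (hZ : SqrtNBddInProb P Z) (hW : SqrtNBddInProb P W)
    (h : ∀ M₁ M₂ : ℝ, ∃ M : ℝ, ∀ᶠ n : ℕ in atTop,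
      {ω | M < |√n * V n ω|} ⊆ {ω | M₁ < |√n * Z n ω|} ∪ {ω | M₂ < |√n * W n ω|}) :
    SqrtNBddInProb P V := by
  intro δ hδ
  obtain ⟨M₁, hM₁⟩ := hZ (δ / 2) (by positivity)
  obtain ⟨M₂, hM₂⟩ := hW (δ / 2) (by positivity)
  obtain ⟨M, hM⟩ := h M₁ M₂
  refine ⟨M, ?_⟩
  filter_upwards [hM₁, hM₂, hM] with n h₁ h₂ hsub
  simp only [← measureReal_def] at h₁ h₂ ⊢
  calc P.real _ ≤ P.real ({ω | M₁ < |√n * Z n ω|} ∪ {ω | M₂ < |√n * W n ω|}) :=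
        measureReal_mono hsub
    _ ≤ _ := measureReal_union_le _ _
    _ ≤ δ := by linarith

theorem of_abs_le (hZ : SqrtNBddInProb P Z) (c : ℝ)
    (h : ∀ᶠ n : ℕ in atTop, ∀ ω, |W n ω| ≤ c * |Z n ω|) : SqrtNBddInProb P W := by
  refine of_subset_union hZ hZ fun M₁ _ => ⟨max c 0 * max M₁ 0, ?_⟩
  filter_upwards [h] with n hn ω hω
  refine Or.inl (show M₁ < _ from lt_of_not_ge fun hle => ?_)
  have hWZ : |√n * W n ω| ≤ c * |√n * Z n ω| := by
    rw [abs_mul, abs_mul, abs_of_nonneg (Real.sqrt_nonneg _), mul_left_comm]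
    exact mul_le_mul_of_nonneg_left (hn ω) (Real.sqrt_nonneg _)
  have : c * |√n * Z n ω| ≤ max c 0 * max M₁ 0 :=
    calc c * |√n * Z n ω| ≤ max c 0 * |√n * Z n ω| := by gcongr; exact le_max_left _ _
      _ ≤ max c 0 * max M₁ 0 := by gcongr; exact hle.trans (le_max_left _ _)
  exact absurd (hWZ.trans this) (not_le.2 hω)

theorem congr (hZ : SqrtNBddInProb P Z) (h : ∀ᶠ n : ℕ in atTop, ∀ ω, W n ω = Z n ω) :
    SqrtNBddInProb P W :=
  hZ.of_abs_le 1 (by filter_upwards [h] with n hn ω; rw [hn ω, one_mul])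

theorem const_mul (hZ : SqrtNBddInProb P Z) (c : ℝ) :
    SqrtNBddInProb P (fun n ω => c * Z n ω) :=
  hZ.of_abs_le |c| (Eventually.of_forall fun _ _ => (abs_mul _ _).le)

theorem neg (hZ : SqrtNBddInProb P Z) : SqrtNBddInProb P (fun n ω => -Z n ω) :=
  hZ.of_abs_le 1 (Eventually.of_forall fun _ _ => by rw [abs_neg, one_mul])

theorem abs (hZ : SqrtNBddInProb P Z) : SqrtNBddInProb P (fun n ω => |Z n ω|) :=
  hZ.of_abs_le 1 (Eventually.of_forall fun _ _ => by rw [abs_abs, one_mul])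

theorem add (hZ : SqrtNBddInProb P Z) (hW : SqrtNBddInProb P W) :
    SqrtNBddInProb P (fun n ω => Z n ω + W n ω) := by
  refine of_subset_union hZ hW fun M₁ M₂ => ⟨M₁ + M₂, Eventually.of_forall
    fun n ω hω => ?_⟩
  by_contra! hle
  simp only [Set.mem_union, Set.mem_ofPred_eq, not_or, not_lt] at hle hω
  have := abs_add_le (√n * Z n ω) (√n * W n ω)
  rw [← mul_add] at this
  linarith

theorem sum {ι : Type*} (s : Finset ι) {Z : ι → ℕ → Ω → ℝ}
    (h : ∀ i ∈ s, SqrtNBddInProb P (Z i)) :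
    SqrtNBddInProb P (fun n ω => ∑ i ∈ s, Z i n ω) := by
  classical
  induction s using Finset.induction_on with
  | empty => simpa using (zero : SqrtNBddInProb P fun _ _ => 0)
  | insert i s hi ih =>
    simp only [Finset.sum_insert hi]
    exact (h i (Finset.mem_insert_self i s)).add
      (ih fun j hj => h j (Finset.mem_insert_of_mem hj))

/-- Where `|ρ| ≤ 1/2` the hypothesis gives `τ ≤ 2 β`, and since `√n ρ` is bounded in
probability, `|ρ| ≤ 1/2` fails only with small probability for large `n`. -/
theorem of_le_add_mul {β ρ τ : ℕ → Ω → ℝ} (hβ : SqrtNBddInProb P β)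
    (hρ : SqrtNBddInProb P ρ) (hτ : ∀ n ω, 0 ≤ τ n ω)
    (h : ∀ n ω, τ n ω ≤ β n ω + ρ n ω * τ n ω) : SqrtNBddInProb P τ := by
  refine of_subset_union hβ hρ fun M₁ M₂ => ⟨2 * max M₁ 0, ?_⟩
  filter_upwards [(Real.tendsto_sqrt_atTop.comp tendsto_natCast_atTop_atTop).eventually_ge_atTop
    (2 * max M₂ 0)] with n hn ω hω
  by_contra! hle
  simp only [Set.mem_union, Set.mem_ofPred_eq, not_or, not_lt, Function.comp_apply] at hle hω hn
  obtain ⟨hβn, hρn⟩ := hle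
  have hs := Real.sqrt_nonneg (n : ℝ)
  have hτn := hτ n ω
  rw [abs_of_nonneg (mul_nonneg hs hτn)] at hω
  have h1 : √n * τ n ω ≤ max M₁ 0 + max M₂ 0 * τ n ω := by
    have := mul_le_mul_of_nonneg_left (h n ω) hs
    have e1 := (le_abs_self (√n * β n ω)).trans (hβn.trans (le_max_left M₁ 0))
    have e2 : √n * ρ n ω * τ n ω ≤ max M₂ 0 * τ n ω :=
      mul_le_mul_of_nonneg_right ((le_abs_self _).trans (hρn.trans (le_max_left _ _))) hτn
    nlinarith
  nlinarith [le_max_right M₂ 0]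

theorem comp_sub (hZ : SqrtNBddInProb P Z) (q : ℕ) :
    SqrtNBddInProb P (fun n ω => Z (n - q) ω) := by
  intro δ hδ
  obtain ⟨M, hM⟩ := hZ δ hδ
  refine ⟨2 * max M 0, ?_⟩
  filter_upwards [(tendsto_sub_atTop_nat q).eventually hM, eventually_ge_atTop (2 * q)]
    with n hn hq
  simp only [← measureReal_def] at hn ⊢
  refine (measureReal_mono fun ω hω => ?_).trans hn
  simp only [Set.mem_ofPred_eq] at hω ⊢
  have hsqrt : √n ≤ 2 * √(n - q : ℕ) := by
    rw [← Real.sqrt_sq (zero_le_two : (0 : ℝ) ≤ 2), ← Real.sqrt_mul (by norm_num)]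
    refine Real.sqrt_le_sqrt ?_
    rw [Nat.cast_sub (by omega)]
    have : (2 * q : ℝ) ≤ n := by exact_mod_cast hq
    nlinarith
  rw [abs_mul, abs_of_nonneg (Real.sqrt_nonneg _)] at hω ⊢
  have := mul_le_mul_of_nonneg_right hsqrt (abs_nonneg (Z (n - q) ω))
  nlinarith [le_max_left M 0]

theorem div_natCast {C : Ω → ℝ} (hC : Measurable C) :
    SqrtNBddInProb P (fun n ω => C ω / n) := by
  intro δ hδ
  have htail : Tendsto (fun k : ℕ => P {ω | (k : ℝ) < |C ω|}) atTop (𝓝 0) := by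
    have hempty : ⋂ k : ℕ, {ω | (k : ℝ) < |C ω|} = ∅ :=
      Set.iInter_eq_empty_iff.2 fun ω => let ⟨k, hk⟩ := exists_nat_ge |C ω|; ⟨k, hk.not_gt⟩
    simpa [hempty, Function.comp_def] using tendsto_measure_iInter_atTop (μ := P)
      (fun k => (measurableSet_lt measurable_const hC.abs).nullMeasurableSet)
      (fun (a b : ℕ) hab ω (hω : (b : ℝ) < |C ω|) =>
        show (a : ℝ) < |C ω| from (Nat.cast_le.2 hab).trans_lt hω)
      ⟨0, measure_ne_top _ _⟩
  obtain ⟨k, hk⟩ := (htail.eventually_lt_const (ENNReal.ofReal_pos.2 hδ)).exists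
  refine ⟨k, ?_⟩
  filter_upwards [eventually_ge_atTop 1] with n hn
  have hn' : (1 : ℝ) ≤ n := by exact_mod_cast hn
  refine (measureReal_mono fun ω hω => ?_).trans (ENNReal.toReal_le_of_le_ofReal hδ.le hk.le)
  simp only [Set.mem_ofPred_eq] at hω ⊢
  refine hω.trans_le ?_
  rw [abs_mul, abs_div, abs_of_nonneg (Real.sqrt_nonneg _), Nat.abs_cast, mul_div_assoc',
    div_le_iff₀ (by positivity)]
  rw [mul_comm]
  exact mul_le_mul_of_nonneg_left (Real.sqrt_le_self_iff.2 (Or.inr hn')) (abs_nonneg _)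

end SqrtNBddInProb

section LinearSystem

attribute [local instance] Matrix.linftyOpNormedAddCommGroup

variable {κ : Type*} [Fintype κ]

theorem pi_norm_le_sum_abs (v : κ → ℝ) : ‖v‖ ≤ ∑ i, |v i| :=
  (pi_norm_le_iff_of_nonneg (by positivity)).2 fun i =>
    (Real.norm_eq_abs _).trans_le
      (Finset.single_le_sum (f := fun i => |v i|) (fun _ _ => abs_nonneg _) (Finset.mem_univ i))

theorem Matrix.linfty_opNorm_le_sum_abs (A : Matrix κ κ ℝ) : ‖A‖ ≤ ∑ i, ∑ j, |A i j| := by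
  have : (Finset.univ.sup fun i => ∑ j, ‖A i j‖₊) ≤ ∑ i, ∑ j, ‖A i j‖₊ :=
    Finset.sup_le fun i hi =>
      Finset.single_le_sum (f := fun i => ∑ j, ‖A i j‖₊) (fun _ _ => by positivity) hi
  rw [Matrix.linfty_opNorm_def]
  simpa using NNReal.coe_le_coe.2 this

variable {Ω : Type*} [MeasurableSpace Ω] {P : Measure Ω} [IsFiniteMeasure P]

theorem SqrtNBddInProb.of_mulVec_eq [DecidableEq κ] {M : Matrix κ κ ℝ} (hM : IsUnit M)
    {R : ℕ → Ω → Matrix κ κ ℝ} {b θ : ℕ → Ω → κ → ℝ}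
    (h : ∀ n ω, (M + R n ω) *ᵥ θ n ω = b n ω)
    (hR : ∀ i j, SqrtNBddInProb P (fun n ω => R n ω i j))
    (hb : ∀ i, SqrtNBddInProb P (fun n ω => b n ω i)) (i : κ) :
    SqrtNBddInProb P (fun n ω => θ n ω i) := by
  have hθ : ∀ n ω, θ n ω = M⁻¹ *ᵥ (b n ω - R n ω *ᵥ θ n ω) := fun n ω => by
    rw [← h n ω, Matrix.add_mulVec, add_sub_cancel_right, Matrix.mulVec_mulVec,
      Matrix.nonsing_inv_mul _ ((Matrix.isUnit_iff_isUnit_det M).1 hM), Matrix.one_mulVec]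
  have hbnorm : SqrtNBddInProb P (fun n ω => ‖b n ω‖) :=
    (sum Finset.univ fun i _ => (hb i).abs).of_abs_le 1 <| Eventually.of_forall fun n ω => by
      rw [abs_norm, one_mul]
      exact (pi_norm_le_sum_abs _).trans (le_abs_self _)
  have hRnorm : SqrtNBddInProb P (fun n ω => ‖R n ω‖) :=
    (sum Finset.univ fun i _ => sum Finset.univ fun j _ => (hR i j).abs).of_abs_le 1 <|
      Eventually.of_forall fun n ω => by
        rw [abs_norm, one_mul]
        exact (Matrix.linfty_opNorm_le_sum_abs _).trans (le_abs_self _)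
  have hnorm : SqrtNBddInProb P (fun n ω => ‖θ n ω‖) := by
    refine of_le_add_mul (hbnorm.const_mul ‖M⁻¹‖) (hRnorm.const_mul ‖M⁻¹‖)
      (fun _ _ => norm_nonneg _) fun n ω => ?_
    calc ‖θ n ω‖ = ‖M⁻¹ *ᵥ (b n ω - R n ω *ᵥ θ n ω)‖ := congrArg _ (hθ n ω)
      _ ≤ ‖M⁻¹‖ * ‖b n ω - R n ω *ᵥ θ n ω‖ := Matrix.linfty_opNorm_mulVec _ _
      _ ≤ ‖M⁻¹‖ * (‖b n ω‖ + ‖R n ω‖ * ‖θ n ω‖) := by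
        have := Matrix.linfty_opNorm_mulVec (R n ω) (θ n ω)
        have := norm_sub_le (b n ω) (R n ω *ᵥ θ n ω)
        gcongr
        linarith
      _ = _ := by ring
  exact hnorm.of_abs_le 1 <| Eventually.of_forall fun n ω => by
    rw [abs_norm, one_mul, ← Real.norm_eq_abs]
    exact norm_le_pi_norm (θ n ω) i

end LinearSystem

def sampleMean {Ω : Type*} (F : ℤ → Ω → ℝ) (n : ℕ) (ω : Ω) : ℝ :=
  (n : ℝ)⁻¹ * ∑ s ∈ Finset.Icc 1 n, F s ω

section SampleMean

variable {Ω : Type*}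

theorem sampleMean_sub_const (F : ℤ → Ω → ℝ) (L : ℝ) {n : ℕ} (hn : n ≠ 0) (ω : Ω) :
    sampleMean (fun s ω => F s ω - L) n ω = sampleMean F n ω - L := by
  simp only [sampleMean, Finset.sum_sub_distrib, Finset.sum_const, Nat.card_Icc,
    add_tsub_cancel_right, nsmul_eq_mul]
  field_simp

theorem sampleMean_mul_sub_eq (U V : ℤ → Ω → ℝ) (a b c : ℝ) {n : ℕ} (hn : n ≠ 0) (ω : Ω) :
    sampleMean (fun s ω => U s ω * V s ω) n ω - (c + a * b) =
      (sampleMean (fun s ω => (U s ω - a) * (V s ω - b)) n ω - c) +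
        a * (sampleMean V n ω - b) + b * (sampleMean U n ω - a) := by
  simp only [sampleMean, sub_mul, mul_sub, Finset.sum_sub_distrib, ← Finset.mul_sum,
    ← Finset.sum_mul, Finset.sum_const, Nat.card_Icc, add_tsub_cancel_right, nsmul_eq_mul]
  field_simp
  ring

theorem sum_Icc_sub_natCast (f : ℤ → ℝ) {q p n : ℕ} (hqp : q ≤ p) (hpn : p ≤ n) :
    ∑ t ∈ Finset.Icc (p + 1) n, f (t - q) =
      ∑ s ∈ Finset.Icc 1 (n - q), f s - ∑ s ∈ Finset.Icc 1 (p - q), f s := by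
  induction n, hpn using Nat.le_induction with
  | base => simp
  | succ n hpn ih =>
    rw [Finset.sum_Icc_succ_top (by omega), ih, show n + 1 - q = n - q + 1 by omega,
      Finset.sum_Icc_succ_top (by omega)]
    push_cast [show q ≤ n by omega]
    ring_nf

variable [MeasurableSpace Ω] {P : Measure Ω} [IsFiniteMeasure P]

theorem SqrtNBddInProb.sampleMean_mul {U V : ℤ → Ω → ℝ} {a b c : ℝ}
    (hU : SqrtNBddInProb P (fun n ω => sampleMean U n ω - a))
    (hV : SqrtNBddInProb P (fun n ω => sampleMean V n ω - b))
    (hUV : SqrtNBddInProb P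
      (fun n ω => sampleMean (fun s ω => (U s ω - a) * (V s ω - b)) n ω - c)) :
    SqrtNBddInProb P (fun n ω => sampleMean (fun s ω => U s ω * V s ω) n ω - (c + a * b)) :=
  ((hUV.add (hV.const_mul a)).add (hU.const_mul b)).congr <| by
    filter_upwards [eventually_ne_atTop 0] with n hn ω
    exact sampleMean_mul_sub_eq U V a b c hn ω

/-- With partial sums `S k = ∑_{s ≤ k} F s`, the window sum is `S (n - q) - S (p - q)`, and
`S (n - q) / n` is the sample mean at time `n - q` rescaled by `(n - q) / n ≤ 1`. -/
theorem SqrtNBddInProb.windowMean {F : ℤ → Ω → ℝ} (hF : ∀ s, Measurable (F s)) {L : ℝ}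
    (h : SqrtNBddInProb P (fun n ω => sampleMean F n ω - L)) {q p : ℕ} (hqp : q ≤ p) :
    SqrtNBddInProb P
      (fun n ω => (n : ℝ)⁻¹ * ∑ t ∈ Finset.Icc (p + 1) n, F (t - q) ω - L) := by
  have hshift : SqrtNBddInProb P
      (fun n ω => ((n - q : ℕ) / n : ℝ) * (sampleMean F (n - q) ω - L)) :=
    (h.comp_sub q).of_abs_le 1 <| Eventually.of_forall fun n ω => by
      rw [abs_mul, one_mul]
      refine mul_le_of_le_one_left (abs_nonneg _) ?_
      rw [abs_of_nonneg (by positivity)]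
      exact div_le_one_of_le₀ (by exact_mod_cast Nat.sub_le n q) (Nat.cast_nonneg n)
  have hhead : SqrtNBddInProb P
      (fun n ω => (-(q * L) - ∑ s ∈ Finset.Icc 1 (p - q), F s ω) / n) :=
    div_natCast (measurable_const.sub (Finset.measurable_sum _ fun s _ => hF s))
  refine (hshift.add hhead).congr ?_
  filter_upwards [eventually_gt_atTop p] with n hn ω
  rw [sum_Icc_sub_natCast (fun s => F s ω) hqp hn.le, sampleMean, Nat.cast_sub (by omega : q ≤ n)]
  have hn0 : (n : ℝ) ≠ 0 := Nat.cast_ne_zero.2 (by omega)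
  have hnq : (n : ℝ) - q ≠ 0 := by
    rw [sub_ne_zero]; exact_mod_cast (by omega : n ≠ q)
  field_simp
  ring

end SampleMean

section AugmentedRegression

variable {κ : Type*}

/-- `E[z zᵀ]` for the regressor `z = (Y, 1)`, where `Y` has covariance `Γ` and mean `μ`. -/
def augmentedSecondMoment (Γ : Matrix κ κ ℝ) (μ : κ → ℝ) :
    Matrix (κ ⊕ Unit) (κ ⊕ Unit) ℝ :=
  Matrix.fromBlocks Γ 0 0 0 + vecMulVec (μ ⊕ᵥ 1) (μ ⊕ᵥ 1)

variable {Ω : Type*} [MeasurableSpace Ω] {P : Measure Ω} [IsFiniteMeasure P]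
  {Y : ℤ → Ω → κ → ℝ} {μ : κ → ℝ} {Γ : Matrix κ κ ℝ} {η : ℤ → Ω → ℝ}

theorem SqrtNBddInProb.sampleMean_sumElim_one
    (hmean : ∀ a, SqrtNBddInProb P (fun n ω => sampleMean (fun s ω => Y s ω a) n ω - μ a))
    (i : κ ⊕ Unit) :
    SqrtNBddInProb P
      (fun n ω => sampleMean (fun s ω => (Y s ω ⊕ᵥ 1) i) n ω - (μ ⊕ᵥ 1) i) := by
  rcases i with a | u
  · exact hmean a
  · refine zero.congr ?_
    filter_upwards [eventually_ne_atTop 0] with n hn ω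
    simp [sampleMean, hn]

theorem SqrtNBddInProb.sampleCov_sumElim_one
    (hcov : ∀ a b, SqrtNBddInProb P (fun n ω =>
      sampleMean (fun s ω => (Y s ω a - μ a) * (Y s ω b - μ b)) n ω - Γ a b))
    (i j : κ ⊕ Unit) :
    SqrtNBddInProb P (fun n ω => sampleMean (fun s ω =>
      ((Y s ω ⊕ᵥ 1) i - (μ ⊕ᵥ 1) i) * ((Y s ω ⊕ᵥ 1) j - (μ ⊕ᵥ 1) j)) n ω -
        Matrix.fromBlocks Γ 0 0 0 i j) := by
  rcases i with a | u <;> rcases j with b | v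
  · exact hcov a b
  all_goals exact zero.congr (Eventually.of_forall fun n ω => by simp [sampleMean])

theorem SqrtNBddInProb.sampleCross_sumElim_one
    (hcross : ∀ a, SqrtNBddInProb P (sampleMean fun s ω => (Y s ω a - μ a) * η (s + 1) ω))
    (i : κ ⊕ Unit) :
    SqrtNBddInProb P (fun n ω => sampleMean (fun s ω =>
      ((Y s ω ⊕ᵥ 1) i - (μ ⊕ᵥ 1) i) * η (s + 1) ω) n ω - 0) := by
  rcases i with a | u
  · simpa using hcross a
  · exact zero.congr (Eventually.of_forall fun n ω => by simp [sampleMean])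

theorem SqrtNBddInProb.windowSecondMoment {p : ℕ} (hp : 0 < p)
    (hY : ∀ s a, Measurable fun ω => Y s ω a)
    (hmean : ∀ a, SqrtNBddInProb P (fun n ω => sampleMean (fun s ω => Y s ω a) n ω - μ a))
    (hcov : ∀ a b, SqrtNBddInProb P (fun n ω =>
      sampleMean (fun s ω => (Y s ω a - μ a) * (Y s ω b - μ b)) n ω - Γ a b))
    (i j : κ ⊕ Unit) :
    SqrtNBddInProb P (fun n ω => ((n : ℝ)⁻¹ • ∑ t ∈ Finset.Icc (p + 1) n,
      vecMulVec (Y (t - 1) ω ⊕ᵥ 1) (Y (t - 1) ω ⊕ᵥ 1) - augmentedSecondMoment Γ μ :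
        Matrix (κ ⊕ Unit) (κ ⊕ Unit) ℝ) i j) := by
  have hz : ∀ s k, Measurable fun ω => (Y s ω ⊕ᵥ (1 : Unit → ℝ)) k := by
    rintro s (a | u)
    exacts [hY s a, measurable_const]
  have := (sampleMean_sumElim_one hmean i).sampleMean_mul (sampleMean_sumElim_one hmean j)
    (sampleCov_sumElim_one hcov i j)
  refine (windowMean (fun s => (hz s i).mul (hz s j)) this hp).congr ?_
  filter_upwards with n ω
  simp [augmentedSecondMoment, Matrix.sum_apply, vecMulVec_apply]

theorem SqrtNBddInProb.windowCross {p : ℕ} (hp : 0 < p)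
    (hY : ∀ s a, Measurable fun ω => Y s ω a) (hη : ∀ s, Measurable (η s))
    (hcross : ∀ a, SqrtNBddInProb P (sampleMean fun s ω => (Y s ω a - μ a) * η (s + 1) ω))
    (hηmean : SqrtNBddInProb P (sampleMean η)) (i : κ ⊕ Unit) :
    SqrtNBddInProb P (fun n ω => (-((n : ℝ)⁻¹ • ∑ t ∈ Finset.Icc (p + 1) n,
      η t ω • (Y (t - 1) ω ⊕ᵥ 1))) i) := by
  have hz : ∀ s, Measurable fun ω => (Y s ω ⊕ᵥ (1 : Unit → ℝ)) i := by
    rcases i with a | u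
    exacts [fun s => hY s a, fun _ => measurable_const]
  have hlag := windowMean (fun s => ((hz s).sub measurable_const).mul (hη (s + 1)))
    (sampleCross_sumElim_one hcross i) hp
  have hnow := windowMean hη (q := 0) (L := 0) (by simpa using hηmean) (Nat.zero_le p)
  refine (hlag.add (hnow.const_mul ((μ ⊕ᵥ 1) i))).neg.congr ?_
  filter_upwards with n ω
  simp [Finset.sum_apply, Finset.mul_sum, ← Finset.sum_add_distrib]
  exact Finset.sum_congr rfl fun _ _ => by ring

variable [Fintype κ] [DecidableEq κ]

theorem isUnit_augmentedSecondMoment (hΓ : IsUnit Γ) : IsUnit (augmentedSecondMoment Γ μ) := by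
  have hblocks : augmentedSecondMoment Γ μ =
      Matrix.fromBlocks (Γ + vecMulVec μ μ) (replicateCol Unit μ) (replicateRow Unit μ) 1 := by
    ext (i | u) (j | v) <;> simp [augmentedSecondMoment, vecMulVec_apply]
  rw [hblocks, isUnit_iff_isUnit_det, det_fromBlocks_one₂₂, ← vecMulVec_eq,
    add_sub_cancel_right, ← isUnit_iff_isUnit_det]
  exact hΓ

theorem SqrtNBddInProb.of_normalEquations {p : ℕ} (hp : 0 < p) (hΓ : IsUnit Γ)
    (hY : ∀ s a, Measurable fun ω => Y s ω a) (hη : ∀ s, Measurable (η s))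
    (hmean : ∀ a, SqrtNBddInProb P (fun n ω => sampleMean (fun s ω => Y s ω a) n ω - μ a))
    (hcov : ∀ a b, SqrtNBddInProb P (fun n ω =>
      sampleMean (fun s ω => (Y s ω a - μ a) * (Y s ω b - μ b)) n ω - Γ a b))
    (hcross : ∀ a, SqrtNBddInProb P (sampleMean fun s ω => (Y s ω a - μ a) * η (s + 1) ω))
    (hηmean : SqrtNBddInProb P (sampleMean η)) {θ : ℕ → Ω → κ ⊕ Unit → ℝ}
    (hθ : ∀ n ω, (∑ t ∈ Finset.Icc (p + 1) n, vecMulVec (Y (t - 1) ω ⊕ᵥ 1) (Y (t - 1) ω ⊕ᵥ 1) :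
      Matrix (κ ⊕ Unit) (κ ⊕ Unit) ℝ) *ᵥ θ n ω =
        -∑ t ∈ Finset.Icc (p + 1) n, η t ω • (Y (t - 1) ω ⊕ᵥ 1))
    (i : κ ⊕ Unit) : SqrtNBddInProb P (fun n ω => θ n ω i) :=
  of_mulVec_eq (isUnit_augmentedSecondMoment hΓ)
    (fun n ω => by rw [add_sub_cancel, smul_mulVec, hθ, smul_neg])
    (windowSecondMoment hp hY hmean hcov) (windowCross hp hY hη hcross hηmean) i

end AugmentedRegression

section NAR

variable {d p : ℕ} {Ω : Type*} {Ad : ℤ → Ω → Matrix (Fin d) (Fin d) ℝ}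
  {X ε : ℤ → Ω → (Fin d → ℝ)} {A : Fin p → Matrix (Fin d) (Fin d) ℝ}
  {G : Fin p → Matrix (Fin d) (Fin d) ℝ → Matrix (Fin d) (Fin d) ℝ}

theorem measurable_Yreg [MeasurableSpace Ω] (hG : ∀ j, Measurable (G j))
    (hAd : ∀ t, Measurable (Ad t)) (hX : ∀ t, Measurable (X t)) (r : Fin d) (s : ℤ)
    (ji : Fin p × Fin d) : Measurable (Yreg G Ad X r s ji) :=
  ((measurable_pi_apply ji.2).comp ((measurable_pi_apply r).comp ((hG _).comp (hAd _)))).mul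
    ((measurable_pi_apply ji.2).comp (hX _))

theorem apply_eq_sum_mul_Yreg_add
    (hmodel : ∀ (t : ℤ) (ω : Ω),
      X t ω = (∑ j : Fin p,
          ((A j).hadamard (G j (Ad (t - 1 - (j : ℕ)) ω))) *ᵥ X (t - 1 - (j : ℕ)) ω)
        + ε t ω)
    (t : ℤ) (ω : Ω) (r : Fin d) :
    X t ω r = ∑ ji : Fin p × Fin d, A ji.1 r ji.2 * Yreg G Ad X r (t - 1) ji ω + ε t ω r := by
  rw [hmodel t ω, Fintype.sum_prod_type]
  simp only [Yreg, Pi.add_apply, Finset.sum_apply, mulVec, dotProduct, hadamard_apply]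
  congr 1
  exact Finset.sum_congr rfl fun j _ => Finset.sum_congr rfl fun i _ => by ring_nf

theorem mulVec_sub_eq_of_isLeastSquares_Yreg
    (hmodel : ∀ (t : ℤ) (ω : Ω),
      X t ω = (∑ j : Fin p,
          ((A j).hadamard (G j (Ad (t - 1 - (j : ℕ)) ω))) *ᵥ X (t - 1 - (j : ℕ)) ω)
        + ε t ω)
    {S : Finset (Fin p × Fin d)} {r : Fin d} (hA0 : ∀ ji ∉ S, A ji.1 r ji.2 = 0)
    {w : Fin p × Fin d → ℝ} (hw : ∀ ji ∉ S, w ji = 0) {m : ℝ} {n : ℕ} {ω : Ω}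
    (hLS : ∀ (w' : Fin p × Fin d → ℝ) (m' : ℝ), (∀ ji, ji ∉ S → w' ji = 0) →
      (∑ t ∈ Finset.Icc (p + 1) n, (X (t : ℤ) ω r -
          (∑ ji : Fin p × Fin d, w ji * Yreg G Ad X r ((t : ℤ) - 1) ji ω) - m) ^ 2) ≤
      (∑ t ∈ Finset.Icc (p + 1) n, (X (t : ℤ) ω r -
          (∑ ji : Fin p × Fin d, w' ji * Yreg G Ad X r ((t : ℤ) - 1) ji ω) - m') ^ 2))
    (mE : ℝ) :
    (∑ t ∈ Finset.Icc (p + 1) n,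
      vecMulVec ((fun a : S => Yreg G Ad X r (t - 1) a ω) ⊕ᵥ (1 : Unit → ℝ))
        ((fun a : S => Yreg G Ad X r (t - 1) a ω) ⊕ᵥ 1)) *ᵥ
      (((fun a : S => A a.1.1 r a.1.2) ⊕ᵥ fun _ : Unit => mE) -
        ((fun a : S => w a) ⊕ᵥ fun _ : Unit => m)) =
    -∑ t ∈ Finset.Icc (p + 1) n,
      (ε t ω r - mE) • ((fun a : S => Yreg G Ad X r (t - 1) a ω) ⊕ᵥ 1) := by
  refine mulVec_sub_eq_of_isLeastSquares (κ := S ⊕ Unit) _ _ (fun t : ℕ => X t ω r) _ _ _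
    (fun t _ => ?_) fun θ => ?_
  · have h := sum_mul_add_eq_dotProduct_sumElim hA0 (fun ji => Yreg G Ad X r (t - 1) ji ω) mE
    rw [apply_eq_sum_mul_Yreg_add hmodel]
    linarith
  · classical
    set w' : Fin p × Fin d → ℝ := fun ji => if h : ji ∈ S then θ (.inl ⟨ji, h⟩) else 0
    have hw' : ∀ ji ∉ S, w' ji = 0 := fun ji h => dif_neg h
    have hθ : ((fun a : S => w' a) ⊕ᵥ fun _ => θ (.inr ())) = θ := by
      ext (a | u)
      · simp [w']
      · rfl
    simpa only [sub_sub, sum_mul_add_eq_dotProduct_sumElim hw,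
      sum_mul_add_eq_dotProduct_sumElim hw', hθ] using hLS w' (θ (.inr ())) hw'

end NAR

theorem stmt4_general {d p : ℕ} (hp : 0 < p)
    {Ω : Type*} [MeasurableSpace Ω] (P : Measure Ω) [IsProbabilityMeasure P]
    (Ad : ℤ → Ω → Matrix (Fin d) (Fin d) ℝ)
    (ε : ℤ → Ω → (Fin d → ℝ)) (mE : Fin d → ℝ)
    (X : ℤ → Ω → (Fin d → ℝ))
    (A : Fin p → Matrix (Fin d) (Fin d) ℝ)
    (G : Fin p → Matrix (Fin d) (Fin d) ℝ → Matrix (Fin d) (Fin d) ℝ)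
    (S : Fin d → Finset (Fin p × Fin d))
    (μY : Fin d → (Fin p × Fin d) → ℝ)
    (what : Fin d → ℕ → Ω → (Fin p × Fin d → ℝ))
    (muhat : Fin d → ℕ → Ω → ℝ)
    -- the network process: measurable, `[−1,1]`-valued, strictly stationary
    (hAdmeas : ∀ t, Measurable (Ad t))
    -- the innovations: i.i.d. with mean `mE`, independent of the network's past
    (hiid : IID P ε)
    (hGmeas : ∀ j, Measurable (G j))
    (hXmeas : ∀ t, Measurable (X t))
    -- the NAR(p) model
    (hmodel : ∀ (t : ℤ) (ω : Ω),
      X t ω = (∑ j : Fin p,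
          ((A j).hadamard (G j (Ad (t - 1 - (j : ℕ)) ω))) *ᵥ X (t - 1 - (j : ℕ)) ω)
        + ε t ω)
    -- parameters outside `S r` are set to zero
    (hA0 : ∀ (r : Fin d) (ji : Fin p × Fin d), ji ∉ S r → A ji.1 r ji.2 = 0)
    -- the least squares estimators
    (hwsupp : ∀ r n ω ji, ji ∉ S r → what r n ω ji = 0)
    (hLS : ∀ (r : Fin d) (n : ℕ) (ω : Ω) (w' : Fin p × Fin d → ℝ) (m' : ℝ),
      (∀ ji, ji ∉ S r → w' ji = 0) →
      (∑ t ∈ Finset.Icc (p + 1) n, (X (t : ℤ) ω r -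
          (∑ ji : Fin p × Fin d, what r n ω ji * Yreg G Ad X r ((t : ℤ) - 1) ji ω) -
          muhat r n ω) ^ 2) ≤
      (∑ t ∈ Finset.Icc (p + 1) n, (X (t : ℤ) ω r -
          (∑ ji : Fin p × Fin d, w' ji * Yreg G Ad X r ((t : ℤ) - 1) ji ω) - m') ^ 2))
    -- Assumption 2(1)
    (hmeanY : ∀ r ji, SqrtNBddInProb P (fun n ω =>
      (n : ℝ)⁻¹ * (∑ s ∈ Finset.Icc 1 n, Yreg G Ad X r (s : ℤ) ji ω) - μY r ji))
    (hΓinv : ∀ r, IsUnit (Matrix.of fun a b : (S r : Finset (Fin p × Fin d)) =>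
      covR P (Yreg G Ad X r 1 a) (Yreg G Ad X r 1 b)))
    (hsampleCov : ∀ r ji kl, SqrtNBddInProb P (fun n ω =>
      (n : ℝ)⁻¹ * (∑ t ∈ Finset.Icc 1 n,
        (Yreg G Ad X r (t : ℤ) ji ω - μY r ji) * (Yreg G Ad X r (t : ℤ) kl ω - μY r kl))
      - covR P (Yreg G Ad X r 1 ji) (Yreg G Ad X r 1 kl)))
    -- Assumption 2(2)
    (hmeanEps : ∀ r, SqrtNBddInProb P (fun n ω =>
      (n : ℝ)⁻¹ * (∑ t ∈ Finset.Icc 1 n, ε (t : ℤ) ω r) - mE r))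
    (hcrossCov : ∀ r ji, SqrtNBddInProb P (fun n ω =>
      (n : ℝ)⁻¹ * ∑ t ∈ Finset.Icc 1 n,
        (Yreg G Ad X r (t : ℤ) ji ω - μY r ji) * (ε ((t : ℤ) + 1) ω r - mE r))) :
    -- conclusion: `√n`-consistency of `μ̂_r` and `ŵ_r`
    ∀ r : Fin d,
      SqrtNBddInProb P (fun n ω => muhat r n ω - mE r) ∧
      ∀ ji ∈ S r,
        SqrtNBddInProb P (fun n ω => what r n ω ji - A ji.1 r ji.2) := by
  intro r
  have hηmean : SqrtNBddInProb P (sampleMean fun s ω => ε s ω r - mE r) :=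
    (hmeanEps r).congr <| by
      filter_upwards [eventually_ne_atTop 0] with n hn ω
      exact sampleMean_sub_const (fun s ω => ε s ω r) (mE r) hn ω
  have herror := SqrtNBddInProb.of_normalEquations (Y := fun s ω (a : S r) => Yreg G Ad X r s a ω)
    hp (hΓinv r) (fun s a => measurable_Yreg hGmeas hAdmeas hXmeas r s a)
    (fun s => ((measurable_pi_apply r).comp (hiid.1 s)).sub_const _)
    (fun a => hmeanY r a) (fun a b => hsampleCov r a b) (fun a => hcrossCov r a) hηmean
    (fun n ω => mulVec_sub_eq_of_isLeastSquares_Yreg hmodel (hA0 r) (hwsupp r n ω) (hLS r n ω)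
      (mE r))
  refine ⟨(herror (.inr ())).neg.congr ?_, fun ji hji => (herror (.inl ⟨ji, hji⟩)).neg.congr ?_⟩
  all_goals exact Eventually.of_forall fun n ω => by simp

/-- Theorem 1, consistency part: under Assumption 2 the least
squares estimators of every component `r` are `√n`-consistent. -/
theorem stmt4 {d p : ℕ} (hd : 0 < d) (hp : 0 < p)
    {Ω : Type*} [MeasurableSpace Ω] (P : Measure Ω) [IsProbabilityMeasure P]
    (Ad : ℤ → Ω → Matrix (Fin d) (Fin d) ℝ)
    (ε : ℤ → Ω → (Fin d → ℝ)) (mE : Fin d → ℝ)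
    (X : ℤ → Ω → (Fin d → ℝ))
    (A : Fin p → Matrix (Fin d) (Fin d) ℝ)
    (G : Fin p → Matrix (Fin d) (Fin d) ℝ → Matrix (Fin d) (Fin d) ℝ)
    (S : Fin d → Finset (Fin p × Fin d))
    (μY : Fin d → (Fin p × Fin d) → ℝ)
    (what : Fin d → ℕ → Ω → (Fin p × Fin d → ℝ))
    (muhat : Fin d → ℕ → Ω → ℝ)
    -- the network process: measurable, `[−1,1]`-valued, strictly stationary
    (hAdmeas : ∀ t, Measurable (Ad t))
    (hAdval : ∀ t ω a b, Ad t ω a b ∈ Set.Icc (-1 : ℝ) 1)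
    (hAdstat : StrictlyStationary P Ad)
    -- the innovations: i.i.d. with mean `mE`, independent of the network's past
    (hiid : IID P ε)
    (hmean : ∀ a, ∫ ω, ε 0 ω a ∂P = mE a)
    (hindep : FutureInnovIndep P ε Ad)
    (hGmeas : ∀ j, Measurable (G j))
    (hXmeas : ∀ t, Measurable (X t))
    -- the NAR(p) model
    (hmodel : ∀ (t : ℤ) (ω : Ω),
      X t ω = (∑ j : Fin p,
          ((A j).hadamard (G j (Ad (t - 1 - (j : ℕ)) ω))) *ᵥ X (t - 1 - (j : ℕ)) ω)
        + ε t ω)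
    -- `S r` is the index set of coefficients with influence on component `r`
    (hS : ∀ (r : Fin d) (ji : Fin p × Fin d),
      ji ∈ S r ↔ 0 < ∫ ω, |G ji.1 (Ad 1 ω) r ji.2| ∂P)
    -- parameters outside `S r` are set to zero
    (hA0 : ∀ (r : Fin d) (ji : Fin p × Fin d), ji ∉ S r → A ji.1 r ji.2 = 0)
    -- the least squares estimators
    (hwsupp : ∀ r n ω ji, ji ∉ S r → what r n ω ji = 0)
    (hLS : ∀ (r : Fin d) (n : ℕ) (ω : Ω) (w' : Fin p × Fin d → ℝ) (m' : ℝ),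
      (∀ ji, ji ∉ S r → w' ji = 0) →
      (∑ t ∈ Finset.Icc (p + 1) n, (X (t : ℤ) ω r -
          (∑ ji : Fin p × Fin d, what r n ω ji * Yreg G Ad X r ((t : ℤ) - 1) ji ω) -
          muhat r n ω) ^ 2) ≤
      (∑ t ∈ Finset.Icc (p + 1) n, (X (t : ℤ) ω r -
          (∑ ji : Fin p × Fin d, w' ji * Yreg G Ad X r ((t : ℤ) - 1) ji ω) - m') ^ 2))
    -- Assumption 2(1)
    (hμY : ∀ r ji, μY r ji = ∫ ω, Yreg G Ad X r 1 ji ω ∂P)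
    (hmeanY : ∀ r ji, SqrtNBddInProb P (fun n ω =>
      (n : ℝ)⁻¹ * (∑ s ∈ Finset.Icc 1 n, Yreg G Ad X r (s : ℤ) ji ω) - μY r ji))
    (hΓinv : ∀ r, IsUnit (Matrix.of fun a b : (S r : Finset (Fin p × Fin d)) =>
      covR P (Yreg G Ad X r 1 a) (Yreg G Ad X r 1 b)))
    (hsampleCov : ∀ r ji kl, SqrtNBddInProb P (fun n ω =>
      (n : ℝ)⁻¹ * (∑ t ∈ Finset.Icc 1 n,
        (Yreg G Ad X r (t : ℤ) ji ω - μY r ji) * (Yreg G Ad X r (t : ℤ) kl ω - μY r kl))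
      - covR P (Yreg G Ad X r 1 ji) (Yreg G Ad X r 1 kl)))
    -- Assumption 2(2)
    (hmeanEps : ∀ r, SqrtNBddInProb P (fun n ω =>
      (n : ℝ)⁻¹ * (∑ t ∈ Finset.Icc 1 n, ε (t : ℤ) ω r) - mE r))
    (hcov0 : ∀ r ji, covR P (Yreg G Ad X r 0 ji) (fun ω => ε 1 ω r) = 0)
    (hcrossCov : ∀ r ji, SqrtNBddInProb P (fun n ω =>
      (n : ℝ)⁻¹ * ∑ t ∈ Finset.Icc 1 n,
        (Yreg G Ad X r (t : ℤ) ji ω - μY r ji) * (ε ((t : ℤ) + 1) ω r - mE r)))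
    -- Assumption 2(3): finite fourth moments
    (hY4 : ∀ r ji, MemLp (Yreg G Ad X r 0 ji) 4 P)
    (hE4 : ∀ a, MemLp (fun ω => ε 0 ω a) 4 P) :
    -- conclusion: `√n`-consistency of `μ̂_r` and `ŵ_r`
    ∀ r : Fin d,
      SqrtNBddInProb P (fun n ω => muhat r n ω - mE r) ∧
      ∀ ji ∈ S r,
        SqrtNBddInProb P (fun n ω => what r n ω ji - A ji.1 r ji.2) :=
  stmt4_general hp P Ad ε mE X A G S μY what muhat hAdmeas hiid hGmeas hXmeas hmodel hA0 hwsupp hLS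
    hmeanY hΓinv hsampleCov hmeanEps hcrossCov
end
end

section
/- Let Ã ∈ ℝ^{m×m}, let j, s ≥ 1, and let M_1, …, M_s and M_1*, …, M_s* be random m×m matrices with all entries bounded by 1 in absolute value, with M_k = M_k* whenever k > j, and such that for every k, max_{i,l} ‖e_iᵀ(M_k − M_k*)e_l‖_{E,2q} ≤ δ_k. Then ‖e_rᵀ( ∏_{k=1}^s (Ã ⊙ M_k) − ∏_{k=1}^s (Ã ⊙ M_k*) )𝟙‖_{E,2q} ≤ √m · ‖|Ã|^s‖₂ · Σ_{k=1}^{min(j,s)} δ_k for every r = 1, …, m. (This is the key coupling bound on the moving-average coefficient matrices B_{j,s} used to prove q-stability of the NAR process.) -/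
noncomputable section
open MeasureTheory ProbabilityTheory Filter Matrix Topology

/-! Telescoping writes the difference of the two products as
`∑ₖ (∏_{i<k} Ã ⊙ Mᵢ) (Ã ⊙ (Mₖ - Mₖ*)) (∏_{i>k} Ã ⊙ Mᵢ*)`, where the terms with `k > j` vanish.
Bounding every factor entrywise by `|Ã|` dominates `e_rᵀ (⋯) 𝟙` pointwise by a combination of the
`|Mₖ - Mₖ*|(a, b)` with nonnegative weights summing to `e_rᵀ |Ã|ˢ 𝟙 ≤ √m ‖|Ã|ˢ‖₂` for each `k`;
Minkowski's inequality in `L^{2q}` then gives the bound. -/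

open scoped ENNReal

section MatrixProduct

variable {n : Type*} [Fintype n]

lemma sum_mul_mul_apply (X Y Z : Matrix n n ℝ) (r : n) :
    ∑ l, (X * Y * Z) r l = ∑ ab : n × n, X r ab.1 * Y ab.1 ab.2 * ∑ l, Z ab.2 l := by
  simp only [Matrix.mul_apply, Finset.sum_mul, Finset.mul_sum, Fintype.sum_prod_type]
  refine Finset.sum_comm.trans ?_
  refine (Finset.sum_congr rfl fun b _ => Finset.sum_comm).trans ?_
  exact Finset.sum_comm

variable [DecidableEq n]

lemma prodI_succ (F : ℕ → Matrix n n ℝ) (s : ℕ) : prodI F (s + 1) = prodI F s * F (s + 1) := rfl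

lemma prodI_sub_prodI (F G : ℕ → Matrix n n ℝ) (s : ℕ) :
    prodI F s - prodI G s =
      ∑ k ∈ Finset.Icc 1 s,
        prodI F (k - 1) * (F k - G k) * prodI (fun t => G (k + t)) (s - k) := by
  induction s with
  | zero => simp [prodI]
  | succ s ih =>
    have hshift : ∀ k ∈ Finset.Icc 1 s,
        prodI F (k - 1) * (F k - G k) * prodI (fun t => G (k + t)) (s + 1 - k) =
          prodI F (k - 1) * (F k - G k) * prodI (fun t => G (k + t)) (s - k) * G (s + 1) := by
      intro k hk
      obtain ⟨hk1, hks⟩ := Finset.mem_Icc.mp hk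
      rw [show s + 1 - k = s - k + 1 by omega, prodI_succ, show k + (s - k + 1) = s + 1 by omega]
      simp only [mul_assoc]
    rw [Finset.sum_Icc_succ_top (by omega), Finset.sum_congr rfl hshift, ← Finset.sum_mul, ← ih,
      Nat.add_sub_cancel, Nat.sub_self, prodI_succ, prodI_succ, prodI]
    noncomm_ring

lemma prodI_sub_prodI_of_eq {F G : ℕ → Matrix n n ℝ} {j : ℕ} (h : ∀ k, j < k → F k = G k)
    (s : ℕ) :
    prodI F s - prodI G s =
      ∑ k ∈ Finset.Icc 1 (min j s),
        prodI F (k - 1) * (F k - G k) * prodI (fun t => G (k + t)) (s - k) := by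
  rw [prodI_sub_prodI]
  refine (Finset.sum_subset (Finset.Icc_subset_Icc_right (min_le_right j s))
    fun k hk hk' => ?_).symm
  simp only [Finset.mem_Icc] at hk hk'
  rw [h k (by omega), sub_self, mul_zero, zero_mul]

lemma abs_prodI_apply_le {B : Matrix n n ℝ} {F : ℕ → Matrix n n ℝ} (hB : ∀ i l, 0 ≤ B i l)
    (hF : ∀ k i l, |F k i l| ≤ B i l) (s : ℕ) (i l : n) :
    |prodI F s i l| ≤ (B ^ s) i l := by
  induction s generalizing l with
  | zero => by_cases h : i = l <;> simp [prodI, Matrix.one_apply, h]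
  | succ s ih =>
    rw [prodI, pow_succ, Matrix.mul_apply, Matrix.mul_apply]
    refine (Finset.abs_sum_le_sum_abs _ _).trans (Finset.sum_le_sum fun a _ => ?_)
    rw [abs_mul]
    exact mul_le_mul (ih a) (hF _ a l) (abs_nonneg _) (Matrix.pow_apply_nonneg hB s i a)

/-- The weight with which the entry `ab` of the `k`-th factor enters `e_rᵀ Bˢ 𝟙`. -/
def couplingWeight (B : Matrix n n ℝ) (s k : ℕ) (r : n) (ab : n × n) : ℝ :=
  (B ^ (k - 1)) r ab.1 * B ab.1 ab.2 * ∑ l, (B ^ (s - k)) ab.2 l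

lemma couplingWeight_nonneg {B : Matrix n n ℝ} (hB : ∀ i l, 0 ≤ B i l) (s k : ℕ) (r : n)
    (ab : n × n) : 0 ≤ couplingWeight B s k r ab :=
  mul_nonneg (mul_nonneg (Matrix.pow_apply_nonneg hB _ _ _) (hB _ _))
    (Finset.sum_nonneg fun _ _ => Matrix.pow_apply_nonneg hB _ _ _)

lemma sum_couplingWeight (B : Matrix n n ℝ) {s k : ℕ} (hk : 1 ≤ k) (hks : k ≤ s) (r : n) :
    ∑ ab, couplingWeight B s k r ab = ∑ l, (B ^ s) r l := by
  simp only [couplingWeight]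
  rw [← sum_mul_mul_apply, ← pow_succ, ← pow_add, show k - 1 + 1 + (s - k) = s by omega]

lemma abs_sum_prodI_hadamard_sub_le (A : Matrix n n ℝ) {N N' : ℕ → Matrix n n ℝ}
    (hN : ∀ k i l, |N k i l| ≤ 1) (hN' : ∀ k i l, |N' k i l| ≤ 1) {j : ℕ}
    (heq : ∀ k, j < k → N k = N' k) (s : ℕ) (r : n) :
    |∑ l, (prodI (fun k => A ⊙ N k) s - prodI (fun k => A ⊙ N' k) s) r l| ≤
      ∑ k ∈ Finset.Icc 1 (min j s), ∑ ab : n × n,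
        couplingWeight (entrywiseAbs A) s k r ab * |N k ab.1 ab.2 - N' k ab.1 ab.2| := by
  set B := entrywiseAbs A
  have hB : ∀ i l, 0 ≤ B i l := fun _ _ => abs_nonneg _
  have hbound : ∀ (N : ℕ → Matrix n n ℝ), (∀ k i l, |N k i l| ≤ 1) →
      ∀ k i l, |(A ⊙ N k) i l| ≤ B i l := fun N hN k i l => by
    rw [Matrix.hadamard_apply, abs_mul]
    exact mul_le_of_le_one_right (abs_nonneg _) (hN k i l)
  rw [prodI_sub_prodI_of_eq (fun k hk => by rw [heq k hk])]
  simp only [Matrix.sum_apply]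
  rw [Finset.sum_comm]
  refine (Finset.abs_sum_le_sum_abs _ _).trans (Finset.sum_le_sum fun k hk => ?_)
  rw [sum_mul_mul_apply]
  refine (Finset.abs_sum_le_sum_abs _ _).trans (Finset.sum_le_sum fun ab _ => ?_)
  rw [Matrix.sub_apply, Matrix.hadamard_apply, Matrix.hadamard_apply, ← mul_sub, abs_mul, abs_mul,
    abs_mul, couplingWeight]
  have hfirst := abs_prodI_apply_le hB (hbound N hN) (k - 1) r ab.1
  have hlast : |∑ l, prodI (fun t => A ⊙ N' (k + t)) (s - k) ab.2 l| ≤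
      ∑ l, (B ^ (s - k)) ab.2 l :=
    (Finset.abs_sum_le_sum_abs _ _).trans (Finset.sum_le_sum fun l _ =>
      abs_prodI_apply_le hB (fun t => hbound N' hN' (k + t)) (s - k) ab.2 l)
  calc _ ≤ (B ^ (k - 1)) r ab.1 * (B ab.1 ab.2 * |N k ab.1 ab.2 - N' k ab.1 ab.2|) *
        ∑ l, (B ^ (s - k)) ab.2 l := by
        have hmid := mul_nonneg (hB ab.1 ab.2) (abs_nonneg (N k ab.1 ab.2 - N' k ab.1 ab.2))
        exact mul_le_mul (mul_le_mul_of_nonneg_right hfirst hmid) hlast (abs_nonneg _)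
          (mul_nonneg (Matrix.pow_apply_nonneg hB _ _ _) hmid)
    _ = _ := by ring

lemma abs_sum_apply_le_sqrt_card_mul_sNorm (B : Matrix n n ℝ) (r : n) :
    |∑ l, B r l| ≤ √(Fintype.card n) * sNorm B := by
  set x : EuclideanSpace ℝ n := WithLp.toLp 2 fun _ => 1
  have hx : ‖x‖ = √(Fintype.card n) := by simp [x, EuclideanSpace.norm_eq]
  calc |∑ l, B r l| = ‖Matrix.toEuclideanCLM (𝕜 := ℝ) B x r‖ := by
        simp [x, Matrix.toEuclideanCLM_toLp, Matrix.mulVec, dotProduct]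
    _ ≤ ‖Matrix.toEuclideanCLM (𝕜 := ℝ) B x‖ := PiLp.norm_apply_le _ r
    _ ≤ sNorm B * ‖x‖ := (Matrix.toEuclideanCLM (𝕜 := ℝ) B).le_opNorm x
    _ = √(Fintype.card n) * sNorm B := by rw [hx, mul_comm]

lemma sum_sum_couplingWeight_mul_le (B : Matrix n n ℝ) {δ : ℕ → ℝ} (hδ : ∀ k, 0 ≤ δ k)
    (j s : ℕ) (r : n) :
    ∑ k ∈ Finset.Icc 1 (min j s), ∑ ab, couplingWeight B s k r ab * δ k ≤
      √(Fintype.card n) * sNorm (B ^ s) * ∑ k ∈ Finset.Icc 1 (min j s), δ k := by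
  calc _ = (∑ l, (B ^ s) r l) * ∑ k ∈ Finset.Icc 1 (min j s), δ k := by
        rw [Finset.mul_sum]
        refine Finset.sum_congr rfl fun k hk => ?_
        obtain ⟨hk1, hk⟩ := Finset.mem_Icc.mp hk
        rw [← Finset.sum_mul, sum_couplingWeight B hk1 (hk.trans (min_le_right j s))]
    _ ≤ _ := mul_le_mul_of_nonneg_right
        ((le_abs_self _).trans (abs_sum_apply_le_sqrt_card_mul_sNorm (B ^ s) r))
        (Finset.sum_nonneg fun k _ => hδ k)

end MatrixProduct

lemma measurable_prodI_apply {Ω n : Type*} [MeasurableSpace Ω] [Fintype n] [DecidableEq n]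
    {F : ℕ → Ω → Matrix n n ℝ} (hF : ∀ k i l, Measurable fun ω => F k ω i l) (s : ℕ)
    (i l : n) :
    Measurable fun ω => prodI (fun k => F k ω) s i l := by
  induction s generalizing l with
  | zero => exact measurable_const
  | succ s ih =>
    simp only [prodI_succ, Matrix.mul_apply]
    exact Finset.measurable_sum _ fun a _ => (ih a).mul (hF _ a l)

section Enorm

variable {Ω : Type*} [MeasurableSpace Ω] {P : Measure Ω}

lemma Enorm_nonneg (p : ℝ) (W : Ω → ℝ) : 0 ≤ Enorm P p W :=
  Real.rpow_nonneg (integral_nonneg fun _ => Real.rpow_nonneg (abs_nonneg _) _) _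

lemma Enorm_eq_toReal_eLpNorm {p : ℝ} (hp : 0 < p) {W : Ω → ℝ}
    (hW : MemLp W (ENNReal.ofReal p) P) :
    Enorm P p W = (eLpNorm W (ENNReal.ofReal p) P).toReal := by
  rw [hW.eLpNorm_eq_integral_rpow_norm (ENNReal.ofReal_pos.mpr hp).ne' ENNReal.ofReal_ne_top,
    ENNReal.toReal_ofReal (by positivity)]
  simp [Enorm, ENNReal.toReal_ofReal hp.le, Real.norm_eq_abs]

lemma Enorm_le_sum_mul_of_abs_le {ι : Type*} (t : Finset ι) {p : ℝ} (hp : 1 ≤ p)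
    {W : Ω → ℝ} {X : ι → Ω → ℝ} {c : ι → ℝ} (hW : AEStronglyMeasurable W P)
    (hX : ∀ i ∈ t, MemLp (X i) (ENNReal.ofReal p) P) (hc : ∀ i ∈ t, 0 ≤ c i)
    (hWX : ∀ ω, |W ω| ≤ ∑ i ∈ t, c i * |X i ω|) :
    Enorm P p W ≤ ∑ i ∈ t, c i * Enorm P p (X i) := by
  set p' := ENNReal.ofReal p
  have hp' : 1 ≤ p' := ENNReal.one_le_ofReal.mpr hp
  have hterm : ∀ i ∈ t, eLpNorm (fun ω => c i * |X i ω|) p' P ≤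
      ENNReal.ofReal (c i) * eLpNorm (X i) p' P := fun i hi => by
    have : (fun ω => c i * |X i ω|) = c i • fun ω => ‖X i ω‖ := by
      funext ω; simp [Real.norm_eq_abs]
    rw [this, ← eLpNorm_norm (X i), ← Real.enorm_eq_ofReal (hc i hi)]
    exact eLpNorm_const_smul_le
  have hbound : eLpNorm W p' P ≤ ∑ i ∈ t, ENNReal.ofReal (c i) * eLpNorm (X i) p' P :=
    calc eLpNorm W p' P ≤ eLpNorm (∑ i ∈ t, fun ω => c i * |X i ω|) p' P :=
          eLpNorm_mono_real fun ω => by simpa [Finset.sum_apply] using hWX ω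
      _ ≤ ∑ i ∈ t, eLpNorm (fun ω => c i * |X i ω|) p' P :=
          eLpNorm_sum_le (fun i hi => ((hX i hi).1.norm.const_mul (c i)).congr
            (ae_of_all _ fun ω => by simp [Real.norm_eq_abs])) hp'
      _ ≤ _ := Finset.sum_le_sum hterm
  have hfinite : ∀ i ∈ t, ENNReal.ofReal (c i) * eLpNorm (X i) p' P ≠ ∞ := fun i hi =>
    ENNReal.mul_ne_top ENNReal.ofReal_ne_top (hX i hi).eLpNorm_ne_top
  have hWmem : MemLp W p' P :=
    ⟨hW, hbound.trans_lt (ENNReal.sum_lt_top.mpr fun i hi => (hfinite i hi).lt_top)⟩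
  rw [Enorm_eq_toReal_eLpNorm (by linarith) hWmem]
  refine (ENNReal.toReal_mono (ENNReal.sum_ne_top.mpr hfinite) hbound).trans_eq ?_
  rw [ENNReal.toReal_sum hfinite]
  refine Finset.sum_congr rfl fun i hi => ?_
  rw [ENNReal.toReal_mul, ENNReal.toReal_ofReal (hc i hi),
    Enorm_eq_toReal_eLpNorm (by linarith) (hX i hi)]

end Enorm

theorem stmt14_general {m : ℕ}
    {Ω : Type*} [MeasurableSpace Ω] (P : Measure Ω) [IsProbabilityMeasure P]
    (Atil : Matrix (Fin m) (Fin m) ℝ)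
    (j s : ℕ)
    (M Mstar : ℕ → Ω → Matrix (Fin m) (Fin m) ℝ)
    (δ : ℕ → ℝ) (q : ℝ) (hq : 1 ≤ q)
    (hMmeas : ∀ k, Measurable (M k)) (hMstarmeas : ∀ k, Measurable (Mstar k))
    -- all entries bounded by 1 in absolute value
    (hMbd : ∀ k ω i l, |M k ω i l| ≤ 1)
    (hMstarbd : ∀ k ω i l, |Mstar k ω i l| ≤ 1)
    -- `M_k = M_k*` whenever `k > j`
    (heq : ∀ k, j < k → ∀ ω, M k ω = Mstar k ω)
    -- entrywise coupling distances bounded by `δ_k`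
    (hδ : ∀ k i l, Enorm P (2 * q) (fun ω => M k ω i l - Mstar k ω i l) ≤ δ k) :
    ∀ r : Fin m,
      Enorm P (2 * q) (fun ω => ∑ l : Fin m,
          (prodI (fun k => Atil.hadamard (M k ω)) s -
           prodI (fun k => Atil.hadamard (Mstar k ω)) s) r l) ≤
        Real.sqrt m * sNorm (entrywiseAbs Atil ^ s) *
          ∑ k ∈ Finset.Icc 1 (min j s), δ k := by
  intro r
  set B := entrywiseAbs Atil
  have hB : ∀ i l, 0 ≤ B i l := fun _ _ => abs_nonneg _
  have hdiff : ∀ k i l,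
      MemLp (fun ω => M k ω i l - Mstar k ω i l) (ENNReal.ofReal (2 * q)) P := fun k i l =>
    MemLp.of_bound ((hMmeas k).eval.eval.sub (hMstarmeas k).eval.eval).aestronglyMeasurable 2
      (ae_of_all _ fun ω => (abs_sub _ _).trans (by linarith [hMbd k ω i l, hMstarbd k ω i l]))
  have hmeas : Measurable fun ω => ∑ l, (prodI (fun k => Atil ⊙ M k ω) s -
      prodI (fun k => Atil ⊙ Mstar k ω) s) r l :=
    Finset.measurable_sum _ fun l _ =>
      (measurable_prodI_apply (fun k _ _ => measurable_const.mul (hMmeas k).eval.eval) s r l).sub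
        (measurable_prodI_apply (fun k _ _ => measurable_const.mul (hMstarmeas k).eval.eval)
          s r l)
  have hδ_nonneg : ∀ k, 0 ≤ δ k := fun k => (Enorm_nonneg _ _).trans (hδ k r r)
  calc _ ≤ ∑ kab ∈ Finset.Icc 1 (min j s) ×ˢ Finset.univ, couplingWeight B s kab.1 r kab.2 *
        Enorm P (2 * q) (fun ω => M kab.1 ω kab.2.1 kab.2.2 - Mstar kab.1 ω kab.2.1 kab.2.2) :=
        Enorm_le_sum_mul_of_abs_le _ (by linarith) hmeas.aestronglyMeasurable
          (fun _ _ => hdiff _ _ _) (fun _ _ => couplingWeight_nonneg hB _ _ _ _) fun ω => by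
            rw [Finset.sum_product]
            exact abs_sum_prodI_hadamard_sub_le Atil (hMbd · ω) (hMstarbd · ω)
              (fun k hk => heq k hk ω) s r
    _ ≤ ∑ k ∈ Finset.Icc 1 (min j s), ∑ ab, couplingWeight B s k r ab * δ k := by
        rw [Finset.sum_product]
        gcongr with k _ ab
        · exact couplingWeight_nonneg hB _ _ _ _
        · exact hδ _ _ _
    _ ≤ _ := by simpa using sum_sum_couplingWeight_mul_le B hδ_nonneg j s r

/-- key coupling bound: if `M_1, …, M_s` and `M_1*, …, M_s*` are
random matrices with entries in `[−1,1]`, agreeing for indices `k > j`, and whose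
entrywise coupling distances in `‖·‖_{E,2q}` are bounded by `δ_k`, then
`‖e_rᵀ(∏_{k=1}^s (Ã ⊙ M_k) − ∏_{k=1}^s (Ã ⊙ M_k*))𝟙‖_{E,2q}
  ≤ √m ‖|Ã|^s‖₂ Σ_{k=1}^{min(j,s)} δ_k`. -/
theorem stmt14 {m : ℕ}
    {Ω : Type*} [MeasurableSpace Ω] (P : Measure Ω) [IsProbabilityMeasure P]
    (Atil : Matrix (Fin m) (Fin m) ℝ)
    (j s : ℕ) (hj : 1 ≤ j) (hs : 1 ≤ s)
    (M Mstar : ℕ → Ω → Matrix (Fin m) (Fin m) ℝ)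
    (δ : ℕ → ℝ) (q : ℝ) (hq : 1 ≤ q)
    (hMmeas : ∀ k, Measurable (M k)) (hMstarmeas : ∀ k, Measurable (Mstar k))
    -- all entries bounded by 1 in absolute value
    (hMbd : ∀ k ω i l, |M k ω i l| ≤ 1)
    (hMstarbd : ∀ k ω i l, |Mstar k ω i l| ≤ 1)
    -- `M_k = M_k*` whenever `k > j`
    (heq : ∀ k, j < k → ∀ ω, M k ω = Mstar k ω)
    -- entrywise coupling distances bounded by `δ_k`
    (hδ : ∀ k i l, Enorm P (2 * q) (fun ω => M k ω i l - Mstar k ω i l) ≤ δ k) :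
    ∀ r : Fin m,
      Enorm P (2 * q) (fun ω => ∑ l : Fin m,
          (prodI (fun k => Atil.hadamard (M k ω)) s -
           prodI (fun k => Atil.hadamard (Mstar k ω)) s) r l) ≤
        Real.sqrt m * sNorm (entrywiseAbs Atil ^ s) *
          ∑ k ∈ Finset.Icc 1 (min j s), δ k :=
  stmt14_general P Atil j s M Mstar δ q hq hMmeas hMstarmeas hMbd hMstarbd heq hδ
end
end
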